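/- arXiv:2210.11303 — 7 statements merged into one kernel-verified Lean document; each statement's English description precedes it below -/
import Mathlib

section
/- Let Λ be a countable index set and {y_λ}_{λ∈Λ} a family of points in ℝⁿ such that for the closed unit ball K there is a constant C_K > 0 with sup_{x∈ℝⁿ} |{λ ∈ Λ : x ∈ y_λ + K}| ≤ C_K. Then for every ε > 0, sup_{μ∈Λ} Σ_{λ∈Λ} (1 + |y_λ − y_μ|)^{−n−ε} is finite; in fact it is bounded by 2^{n+ε} C_K ‖(1+|·|)^{−n−ε}‖_{L¹(ℝⁿ)} / |K|. -/
/-!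
On the ball `closedBall (y l) 1` one has `1 + |x - z| ≤ 2 (1 + |y l - z|)`, so each term
`(1 + |y l - z|)^(-r)` is at most `2^r / |K|` times the integral of `(1 + |x - z|)^(-r)` over that
ball. Since every point lies in at most `C_K` of the balls, any finite sum of these ball integrals
is at most `C_K` times the integral over the whole space, which is finite as soon as `r > n`.
-/

open MeasureTheory Metric Module Finset

theorem sum_setIntegral_le_mul_integral_of_overlap {α ι : Type*} [MeasurableSpace α]
    {μ : Measure α} {f : α → ℝ} (hf : Integrable f μ) (hf0 : 0 ≤ f) {s : ι → Set α}
    (hs : ∀ i, MeasurableSet (s i)) {C : ℝ}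
    (hC : ∀ x (S : Finset ι), (∀ i ∈ S, x ∈ s i) → (#S : ℝ) ≤ C) (S : Finset ι) :
    ∑ i ∈ S, ∫ x in s i, f x ∂μ ≤ C * ∫ x, f x ∂μ := by
  classical
  have hind : ∀ i, Integrable ((s i).indicator f) μ := fun i => hf.indicator (hs i)
  calc ∑ i ∈ S, ∫ x in s i, f x ∂μ = ∫ x, ∑ i ∈ S, (s i).indicator f x ∂μ := by
        rw [integral_finsetSum S fun i _ => hind i]
        exact Finset.sum_congr rfl fun i _ => (integral_indicator (hs i)).symm
    _ ≤ ∫ x, C * f x ∂μ := by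
        refine integral_mono (integrable_finsetSum S fun i _ => hind i) (hf.const_mul C)
          fun x => ?_
        rw [Finset.sum_indicator_eq_sum_filter S (fun _ => f) s (fun _ => x), Finset.sum_const,
          nsmul_eq_mul]
        exact mul_le_mul_of_nonneg_right (hC x _ fun i hi => (Finset.mem_filter.mp hi).2) (hf0 x)
    _ = C * ∫ x, f x ∂μ := integral_const_mul C f

theorem one_add_dist_le_two_mul {X : Type*} [PseudoMetricSpace X] {x a : X} (hx : dist x a ≤ 1)
    (z : X) : 1 + dist x z ≤ 2 * (1 + dist a z) := by
  linarith [dist_triangle x a z, dist_nonneg (x := a) (y := z)]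

theorem integral_one_add_dist_rpow_neg {G : Type*} [NormedAddCommGroup G] [MeasurableSpace G]
    [BorelSpace G] (μ : Measure G) [μ.IsAddRightInvariant] (z : G) (r : ℝ) :
    ∫ x, (1 + dist x z) ^ (-r) ∂μ = ∫ x, (1 + ‖x‖) ^ (-r) ∂μ := by
  simp_rw [dist_eq_norm]
  exact integral_sub_right_eq_self (fun x => (1 + ‖x‖) ^ (-r)) z

section AddHaar

variable {E : Type*} [NormedAddCommGroup E] [NormedSpace ℝ E] [FiniteDimensional ℝ E]
  [MeasurableSpace E] [BorelSpace E] (μ : Measure E) [μ.IsAddHaarMeasure]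

theorem integrable_one_add_dist_rpow_neg (z : E) {r : ℝ} (hr : (finrank ℝ E : ℝ) < r) :
    Integrable (fun x => (1 + dist x z) ^ (-r)) μ := by
  simp_rw [dist_eq_norm]
  exact (integrable_one_add_norm hr).comp_sub_right z

theorem one_add_dist_rpow_neg_le_setIntegral (a z : E) {r : ℝ} (hr : 0 ≤ r) :
    (1 + dist a z) ^ (-r) ≤
      2 ^ r / μ.real (closedBall 0 1) * ∫ x in closedBall a 1, (1 + dist x z) ^ (-r) ∂μ := by
  have hV : 0 < μ.real (closedBall (0 : E) 1) :=
    ENNReal.toReal_pos (measure_closedBall_pos μ 0 one_pos).ne' measure_closedBall_lt_top.ne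
  have hlower : ∀ x ∈ closedBall a 1,
      2 ^ (-r) * (1 + dist a z) ^ (-r) ≤ (1 + dist x z) ^ (-r) := by
    intro x hx
    rw [← Real.mul_rpow zero_le_two (by positivity)]
    exact Real.rpow_le_rpow_of_nonpos (by positivity) (one_add_dist_le_two_mul hx z)
      (neg_nonpos.mpr hr)
  have hcont : Continuous fun x => (1 + dist x z) ^ (-r) :=
    (continuous_const.add (continuous_id.dist continuous_const)).rpow_const
      fun x => Or.inl (by positivity : (0 : ℝ) < 1 + dist x z).ne'
  have key := setIntegral_ge_of_const_le_real measurableSet_closedBall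
    (measure_closedBall_lt_top (μ := μ)).ne hlower
    (hcont.continuousOn.integrableOn_compact (isCompact_closedBall a 1))
  rw [measureReal_def, Measure.addHaar_closedBall_center, ← measureReal_def] at key
  rw [div_mul_eq_mul_div, le_div_iff₀ hV]
  calc (1 + dist a z) ^ (-r) * μ.real (closedBall 0 1)
      = 2 ^ r * (2 ^ (-r) * (1 + dist a z) ^ (-r) * μ.real (closedBall 0 1)) := by
        rw [← mul_assoc, ← mul_assoc, ← Real.rpow_add two_pos]
        simp
    _ ≤ _ := mul_le_mul_of_nonneg_left key (by positivity)


theorem sum_one_add_dist_rpow_neg_le_of_overlap {ι : Type*} (y : ι → E) {C r : ℝ}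
    (hr : (finrank ℝ E : ℝ) < r)
    (hC : ∀ x (S : Finset ι), (∀ i ∈ S, x ∈ closedBall (y i) 1) → (#S : ℝ) ≤ C)
    (z : E) (S : Finset ι) :
    ∑ i ∈ S, (1 + dist (y i) z) ^ (-r) ≤
      2 ^ r * C * (∫ x, (1 + ‖x‖) ^ (-r) ∂μ) / μ.real (closedBall 0 1) := by
  have hr0 : 0 ≤ r := (Nat.cast_nonneg _).trans hr.le
  calc ∑ i ∈ S, (1 + dist (y i) z) ^ (-r)
      ≤ ∑ i ∈ S, 2 ^ r / μ.real (closedBall 0 1) *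
          ∫ x in closedBall (y i) 1, (1 + dist x z) ^ (-r) ∂μ :=
        Finset.sum_le_sum fun i _ => one_add_dist_rpow_neg_le_setIntegral μ (y i) z hr0
    _ = 2 ^ r / μ.real (closedBall 0 1) *
          ∑ i ∈ S, ∫ x in closedBall (y i) 1, (1 + dist x z) ^ (-r) ∂μ := by
        rw [Finset.mul_sum]
    _ ≤ 2 ^ r / μ.real (closedBall 0 1) * (C * ∫ x, (1 + dist x z) ^ (-r) ∂μ) := by
        gcongr
        exact sum_setIntegral_le_mul_integral_of_overlap
          (integrable_one_add_dist_rpow_neg μ z hr) (fun x => by positivity)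
          (fun i => measurableSet_closedBall) hC S
    _ = 2 ^ r * C * (∫ x, (1 + ‖x‖) ^ (-r) ∂μ) / μ.real (closedBall 0 1) := by
        rw [integral_one_add_dist_rpow_neg]
        ring

end AddHaar

theorem stmt_0_general (n : ℕ) (Λ : Type*)
    (y : Λ → EuclideanSpace ℝ (Fin n)) (ε CK : ℝ) (hε : 0 < ε)
    (hover : ∀ x : EuclideanSpace ℝ (Fin n),
      ∃ hfin : {l : Λ |
        x - y l ∈ Metric.closedBall (0 : EuclideanSpace ℝ (Fin n)) 1}.Finite,
        (hfin.toFinset.card : ℝ) ≤ CK) :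
    ∀ μ : Λ,
      Summable (fun l : Λ => (1 + dist (y l) (y μ)) ^ (-((n : ℝ) + ε))) ∧
      ∑' l : Λ, (1 + dist (y l) (y μ)) ^ (-((n : ℝ) + ε)) ≤
        2 ^ ((n : ℝ) + ε) * CK *
          (∫ x : EuclideanSpace ℝ (Fin n), (1 + ‖x‖) ^ (-((n : ℝ) + ε))) /
          (volume (Metric.closedBall (0 : EuclideanSpace ℝ (Fin n)) 1)).toReal := by
  intro μ
  have hr : (finrank ℝ (EuclideanSpace ℝ (Fin n)) : ℝ) < n + ε := by
    rw [finrank_euclideanSpace_fin]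
    linarith
  have hC : ∀ x (S : Finset Λ), (∀ l ∈ S, x ∈ closedBall (y l) 1) → (#S : ℝ) ≤ CK := by
    intro x S hS
    obtain ⟨hfin, hcard⟩ := hover x
    have hsub : S ⊆ hfin.toFinset := fun l hl => by
      simpa [hfin.mem_toFinset, ← dist_eq_norm] using hS l hl
    exact le_trans (by exact_mod_cast Finset.card_le_card hsub) hcard
  have hpartial := sum_one_add_dist_rpow_neg_le_of_overlap volume y hr hC (y μ)
  have hsummable := summable_of_sum_le (fun l => by positivity) hpartial
  exact ⟨hsummable, hsummable.tsum_le_of_sum_le hpartial⟩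

/-- If the translates `y l + K` of the closed unit ball `K` have overlap bounded
by `C_K`, then the sums `∑_λ (1 + |y_λ − y_μ|)^{−n−ε}` are uniformly bounded by
`2^{n+ε} C_K ‖(1+|·|)^{−n−ε}‖_{L¹} / |K|`. -/
theorem stmt_0 (n : ℕ) (Λ : Type*) [Countable Λ]
    (y : Λ → EuclideanSpace ℝ (Fin n)) (ε CK : ℝ) (hε : 0 < ε) (hCK : 0 < CK)
    (hover : ∀ x : EuclideanSpace ℝ (Fin n),
      ∃ hfin : {l : Λ |
        x - y l ∈ Metric.closedBall (0 : EuclideanSpace ℝ (Fin n)) 1}.Finite,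
        (hfin.toFinset.card : ℝ) ≤ CK) :
    ∀ μ : Λ,
      Summable (fun l : Λ => (1 + dist (y l) (y μ)) ^ (-((n : ℝ) + ε))) ∧
      ∑' l : Λ, (1 + dist (y l) (y μ)) ^ (-((n : ℝ) + ε)) ≤
        2 ^ ((n : ℝ) + ε) * CK *
          (∫ x : EuclideanSpace ℝ (Fin n), (1 + ‖x‖) ^ (-((n : ℝ) + ε))) /
          (volume (Metric.closedBall (0 : EuclideanSpace ℝ (Fin n)) 1)).toReal :=
  stmt_0_general n Λ y ε CK hε hover
end

section
/- Let Λ be a countable index set and {y_λ}_{λ∈Λ} points in ℝⁿ satisfying: (a) for every compact K ⊆ ℝⁿ there is C_K > 0 with sup_{x∈ℝⁿ} |{λ : x ∈ y_λ + K}| ≤ C_K, and (b) ℝⁿ = ∪_λ (y_λ + U) for some bounded open neighbourhood U of 0. Let A: [0,∞) → [0,∞) be a nondecreasing function such that e^{−A(h|x|/2)} is integrable on ℝⁿ for every h > 0 and A(h|x|) ≤ A(h|x'|) + A(2h|x−x'|) type subadditivity holds via e^{A(ρ+λ)} ≤ 2 e^{A(2ρ)} e^{A(2λ)}. Then for every h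 > 0 and ε > 0 there exists R > 0 such that sup_{μ∈Λ} Σ_{λ: |y_λ−y_μ| > R} e^{−A(h|y_λ−y_μ|)} ≤ ε. -/
/-!
If `|x - y_λ| ≤ 1`, the inequality `e^{A(ρ+λ)} ≤ 2 e^{A(2ρ)} e^{A(2λ)}` gives
`e^{-A(h|y_λ - y_μ|)} ≤ 2 e^{A(h)} e^{-A(h|x - y_μ|/2)}`. Averaging this over the unit ball around
`y_λ` and summing over the `λ` with `|y_λ - y_μ| > R`, the bounded overlap of these balls (any
point lies in at most `C` of them) bounds the tail sum by `2 e^{A(h)} C / |B_1|` times the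
integral of `e^{-A(h|x|/2)}` outside the ball of radius `R - 1`, which is small for `R` large.
-/

open MeasureTheory Filter Topology Metric

section Tail

variable {E : Type*} [NormedAddCommGroup E] [MeasurableSpace E] [BorelSpace E]

theorem tendsto_setIntegral_compl_ball {μ : Measure E} {g : E → ℝ} (hg : Integrable g μ)
    (c : E) : Tendsto (fun k : ℕ => ∫ x in (ball c k)ᶜ, g x ∂μ) atTop (𝓝 0) := by
  have hanti : Antitone fun k : ℕ => (ball c (k : ℝ))ᶜ := fun i j hij =>
    Set.compl_subset_compl.2 (ball_subset_ball (by exact_mod_cast hij))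
  have hempty : ⋂ k : ℕ, (ball c (k : ℝ))ᶜ = ∅ := by
    rw [← Set.compl_iUnion, iUnion_ball_nat, Set.compl_univ]
  simpa [hempty] using
    tendsto_setIntegral_of_antitone (fun _ => measurableSet_ball.compl) hanti ⟨0, hg.integrableOn⟩

theorem setIntegral_compl_ball_comp_sub (μ : Measure E) [μ.IsAddRightInvariant] (g : E → ℝ)
    (c : E) (r : ℝ) : ∫ x in (ball c r)ᶜ, g (x - c) ∂μ = ∫ x in (ball 0 r)ᶜ, g x ∂μ := by
  have hpre : (ball c r)ᶜ = (· - c) ⁻¹' (ball 0 r)ᶜ := by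
    ext x; simp [dist_eq_norm]
  rw [hpre]
  exact (measurePreserving_sub_right μ c).setIntegral_preimage_emb
    (measurableEmbedding_subRight c) g _

end Tail

open scoped Classical in
theorem sum_setIntegral_le_mul_setIntegral_of_card_le {X ι : Type*} [MeasurableSpace X]
    {μ : Measure X} {f : X → ℝ} (hf0 : 0 ≤ f) (hf : Integrable f μ) {s : ι → Set X} {S : Set X}
    (hs : ∀ i, MeasurableSet (s i)) (hS : MeasurableSet S) {F : Finset ι}
    (hsS : ∀ i ∈ F, s i ⊆ S) {C : ℝ} (hC : ∀ x, ((F.filter (x ∈ s ·)).card : ℝ) ≤ C) :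
    ∑ i ∈ F, ∫ x in s i, f x ∂μ ≤ C * ∫ x in S, f x ∂μ := by
  have hpt : ∀ x, ∑ i ∈ F, (s i).indicator f x ≤ C * S.indicator f x := by
    intro x
    have hsum : ∑ i ∈ F, (s i).indicator f x = (F.filter (x ∈ s ·)).card * f x := by
      simp only [Set.indicator_apply]
      rw [← Finset.sum_filter, Finset.sum_const, nsmul_eq_mul]
    rw [hsum]
    rcases (F.filter (x ∈ s ·)).eq_empty_or_nonempty with hF | ⟨i, hi⟩
    · rw [hF, Finset.card_empty, Nat.cast_zero, zero_mul]
      exact mul_nonneg ((Nat.cast_nonneg _).trans (hC x))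
        (Set.indicator_nonneg (fun y _ => hf0 y) x)
    · rw [Finset.mem_filter] at hi
      rw [Set.indicator_of_mem (hsS i hi.1 hi.2)]
      exact mul_le_mul_of_nonneg_right (hC x) (hf0 x)
  have hint : ∀ i ∈ F, Integrable ((s i).indicator f) μ := fun i _ => hf.indicator (hs i)
  calc ∑ i ∈ F, ∫ x in s i, f x ∂μ = ∫ x, ∑ i ∈ F, (s i).indicator f x ∂μ := by
        rw [integral_finsetSum F hint]
        exact Finset.sum_congr rfl fun i _ => (integral_indicator (hs i)).symm
    _ ≤ ∫ x, C * S.indicator f x ∂μ :=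
        integral_mono (integrable_finsetSum F hint) ((hf.indicator hS).const_mul C) hpt
    _ = C * ∫ x in S, f x ∂μ := by rw [integral_const_mul, integral_indicator hS]

theorem exp_neg_le_of_dist_le_one {X : Type*} [PseudoMetricSpace X] {A : ℝ → ℝ}
    (hA_mono : ∀ a b : ℝ, 0 ≤ a → a ≤ b → A a ≤ A b)
    (hA_sub : ∀ ρ lam : ℝ, 0 ≤ ρ → 0 ≤ lam →
      Real.exp (A (ρ + lam)) ≤ 2 * Real.exp (A (2 * ρ)) * Real.exp (A (2 * lam)))
    {h : ℝ} (hh : 0 ≤ h) {x p q : X} (hx : dist x p ≤ 1) :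
    Real.exp (-A (h * dist p q)) ≤ 2 * Real.exp (A h) * Real.exp (-A (h * dist x q / 2)) := by
  have hsplit : Real.exp (A (h * dist x q / 2)) ≤
      2 * Real.exp (A h) * Real.exp (A (h * dist p q)) :=
    calc Real.exp (A (h * dist x q / 2))
        ≤ Real.exp (A (h * dist x p / 2 + h * dist p q / 2)) := by
          gcongr
          refine hA_mono _ _ (by positivity) ?_
          nlinarith [dist_triangle x p q]
      _ ≤ 2 * Real.exp (A (2 * (h * dist x p / 2))) * Real.exp (A (2 * (h * dist p q / 2))) :=
          hA_sub _ _ (by positivity) (by positivity)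
      _ = 2 * Real.exp (A (h * dist x p)) * Real.exp (A (h * dist p q)) := by ring_nf
      _ ≤ 2 * Real.exp (A h) * Real.exp (A (h * dist p q)) := by
          gcongr
          exact hA_mono _ _ (by positivity) (mul_le_of_le_one_right hh hx)
  rw [Real.exp_neg, Real.exp_neg, ← div_eq_mul_inv, le_div_iff₀ (Real.exp_pos _),
    inv_mul_le_iff₀ (Real.exp_pos _)]
  linarith

theorem exp_neg_mul_measureReal_ball_le {E : Type*} [NormedAddCommGroup E] [MeasurableSpace E]
    [BorelSpace E] [ProperSpace E] (μ : Measure E) [μ.IsAddHaarMeasure] {A : ℝ → ℝ}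
    (hA_mono : ∀ a b : ℝ, 0 ≤ a → a ≤ b → A a ≤ A b)
    (hA_sub : ∀ ρ lam : ℝ, 0 ≤ ρ → 0 ≤ lam →
      Real.exp (A (ρ + lam)) ≤ 2 * Real.exp (A (2 * ρ)) * Real.exp (A (2 * lam)))
    {h : ℝ} (hh : 0 ≤ h) {q : E} (hf : Integrable (fun x => Real.exp (-A (h * ‖x - q‖ / 2))) μ)
    (p : E) :
    Real.exp (-A (h * dist p q)) * μ.real (ball 0 1) ≤
      2 * Real.exp (A h) * ∫ x in ball p 1, Real.exp (-A (h * ‖x - q‖ / 2)) ∂μ := by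
  rw [← integral_const_mul, ← Measure.addHaar_real_ball_center μ p]
  refine setIntegral_ge_of_const_le_real measurableSet_ball measure_ball_lt_top.ne
    (fun x hx => ?_) (hf.const_mul _).integrableOn
  rw [← dist_eq_norm]
  exact exp_neg_le_of_dist_le_one hA_mono hA_sub hh (mem_ball.1 hx).le

open scoped Classical in
theorem sum_exp_neg_mul_measureReal_ball_le {E Λ : Type*} [NormedAddCommGroup E]
    [MeasurableSpace E] [BorelSpace E] [ProperSpace E] (μ : Measure E) [μ.IsAddHaarMeasure]
    (y : Λ → E) {A : ℝ → ℝ}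
    (hA_mono : ∀ a b : ℝ, 0 ≤ a → a ≤ b → A a ≤ A b)
    (hA_sub : ∀ ρ lam : ℝ, 0 ≤ ρ → 0 ≤ lam →
      Real.exp (A (ρ + lam)) ≤ 2 * Real.exp (A (2 * ρ)) * Real.exp (A (2 * lam)))
    {h : ℝ} (hh : 0 ≤ h) (hg : Integrable (fun x : E => Real.exp (-A (h * ‖x‖ / 2))) μ) {C : ℝ}
    (hC : ∀ x, ∃ hfin : {l : Λ | x - y l ∈ closedBall 0 1}.Finite, (hfin.toFinset.card : ℝ) ≤ C)
    (r : ℝ) (m : Λ) (F : Finset {l : Λ // r + 1 < dist (y l) (y m)}) :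
    (∑ l ∈ F, Real.exp (-A (h * dist (y l.1) (y m)))) * μ.real (ball 0 1) ≤
      2 * Real.exp (A h) * C * ∫ x in (ball 0 r)ᶜ, Real.exp (-A (h * ‖x‖ / 2)) ∂μ := by
  set f : E → ℝ := fun x => Real.exp (-A (h * ‖x - y m‖ / 2))
  have hf : Integrable f μ := hg.comp_sub_right (y m)
  have hoverlap : ∀ x, ((F.filter fun l => x ∈ ball (y l.1) 1).card : ℝ) ≤ C := by
    intro x
    obtain ⟨hfin, hcard⟩ := hC x
    refine le_trans (Nat.cast_le.2 (Finset.card_le_card_of_injOn Subtype.val (fun l hl => ?_)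
      Subtype.val_injective.injOn)) hcard
    rw [Finset.mem_coe, Finset.mem_filter, mem_ball] at hl
    simpa [dist_eq_norm] using hl.2.le
  have hfar : ∀ l ∈ F, ball (y l.1) 1 ⊆ (ball (y m) r)ᶜ := by
    intro l _ x hx
    rw [mem_ball'] at hx
    rw [Set.mem_compl_iff, mem_ball, not_lt]
    linarith [l.2, dist_triangle (y l.1) x (y m)]
  calc (∑ l ∈ F, Real.exp (-A (h * dist (y l.1) (y m)))) * μ.real (ball 0 1)
      ≤ ∑ l ∈ F, 2 * Real.exp (A h) * ∫ x in ball (y l.1) 1, f x ∂μ := by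
        rw [Finset.sum_mul]
        exact Finset.sum_le_sum fun l _ =>
          exp_neg_mul_measureReal_ball_le μ hA_mono hA_sub hh hf (y l.1)
    _ ≤ 2 * Real.exp (A h) * (C * ∫ x in (ball (y m) r)ᶜ, f x ∂μ) := by
        rw [← Finset.mul_sum]
        gcongr
        exact sum_setIntegral_le_mul_setIntegral_of_card_le (fun x => (Real.exp_pos _).le) hf
          (fun _ => measurableSet_ball) measurableSet_ball.compl hfar hoverlap
    _ = 2 * Real.exp (A h) * C * ∫ x in (ball 0 r)ᶜ, Real.exp (-A (h * ‖x‖ / 2)) ∂μ := by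
        rw [setIntegral_compl_ball_comp_sub μ (fun x => Real.exp (-A (h * ‖x‖ / 2)))]
        ring

theorem stmt_1_general (n : ℕ) (Λ : Type*)
    (y : Λ → EuclideanSpace ℝ (Fin n)) (A : ℝ → ℝ)
    (hA_mono : ∀ a b : ℝ, 0 ≤ a → a ≤ b → A a ≤ A b)
    (hA_sub : ∀ ρ lam : ℝ, 0 ≤ ρ → 0 ≤ lam →
      Real.exp (A (ρ + lam)) ≤ 2 * Real.exp (A (2 * ρ)) * Real.exp (A (2 * lam)))
    (hA_int : ∀ h : ℝ, 0 < h →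
      Integrable (fun x : EuclideanSpace ℝ (Fin n) => Real.exp (-A (h * ‖x‖ / 2))))
    (hover : ∀ K : Set (EuclideanSpace ℝ (Fin n)), IsCompact K →
      ∃ C > (0:ℝ), ∀ x, ∃ hfin : {l : Λ | x - y l ∈ K}.Finite,
        (hfin.toFinset.card : ℝ) ≤ C) :
    ∀ h > (0:ℝ), ∀ ε > (0:ℝ), ∃ R > (0:ℝ), ∀ μ : Λ,
      Summable (fun l : {l : Λ // R < dist (y l) (y μ)} =>
        Real.exp (-A (h * dist (y l.1) (y μ)))) ∧
      ∑' l : {l : Λ // R < dist (y l) (y μ)},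
        Real.exp (-A (h * dist (y l.1) (y μ))) ≤ ε := by
  intro h hh ε hε
  obtain ⟨C, hC, hCcard⟩ := hover (closedBall 0 1) (isCompact_closedBall 0 1)
  set V := volume.real (ball (0 : EuclideanSpace ℝ (Fin n)) 1)
  have hV : 0 < V := ENNReal.toReal_pos (measure_ball_pos _ _ one_pos).ne' measure_ball_lt_top.ne
  set c := 2 * Real.exp (A h) * C / V
  have hc : 0 < c := by positivity
  obtain ⟨K, hK⟩ := ((tendsto_setIntegral_compl_ball (hA_int h hh) 0).eventually
    (gt_mem_nhds (div_pos hε hc))).exists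
  refine ⟨K + 1, by positivity, fun m => ?_⟩
  have hpartial : ∀ F : Finset {l // (K : ℝ) + 1 < dist (y l) (y m)},
      ∑ l ∈ F, Real.exp (-A (h * dist (y l.1) (y m))) ≤ ε := by
    intro F
    calc ∑ l ∈ F, Real.exp (-A (h * dist (y l.1) (y m)))
        ≤ c * ∫ x : EuclideanSpace ℝ (Fin n) in (ball 0 K)ᶜ, Real.exp (-A (h * ‖x‖ / 2)) := by
          rw [div_mul_eq_mul_div, le_div_iff₀ hV]
          exact sum_exp_neg_mul_measureReal_ball_le volume y hA_mono hA_sub hh.le (hA_int h hh)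
            hCcard K m F
      _ ≤ c * (ε / c) := by gcongr
      _ = ε := mul_div_cancel₀ ε hc.ne'
  have hsum := summable_of_sum_le (fun l => (Real.exp_pos _).le) hpartial
  exact ⟨hsum, hsum.tsum_le_of_sum_le hpartial⟩

/-- For a family of points with bounded overlap and the covering property, and an
associated-type function `A`, the tails `∑_{|y_λ−y_μ|>R} e^{−A(h|y_λ−y_μ|)}` can be made
uniformly (in `μ`) smaller than any `ε > 0` by choosing `R` large. -/
theorem stmt_1 (n : ℕ) (Λ : Type*) [Countable Λ]
    (y : Λ → EuclideanSpace ℝ (Fin n)) (A : ℝ → ℝ)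
    (hA_nonneg : ∀ a : ℝ, 0 ≤ a → 0 ≤ A a)
    (hA_mono : ∀ a b : ℝ, 0 ≤ a → a ≤ b → A a ≤ A b)
    (hA_sub : ∀ ρ lam : ℝ, 0 ≤ ρ → 0 ≤ lam →
      Real.exp (A (ρ + lam)) ≤ 2 * Real.exp (A (2 * ρ)) * Real.exp (A (2 * lam)))
    (hA_int : ∀ h : ℝ, 0 < h →
      Integrable (fun x : EuclideanSpace ℝ (Fin n) => Real.exp (-A (h * ‖x‖ / 2))))
    (hover : ∀ K : Set (EuclideanSpace ℝ (Fin n)), IsCompact K →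
      ∃ C > (0:ℝ), ∀ x, ∃ hfin : {l : Λ | x - y l ∈ K}.Finite,
        (hfin.toFinset.card : ℝ) ≤ C)
    (hcov : ∃ U : Set (EuclideanSpace ℝ (Fin n)),
      IsOpen U ∧ Bornology.IsBounded U ∧ (0 : EuclideanSpace ℝ (Fin n)) ∈ U ∧
        ∀ x, ∃ l, x - y l ∈ U) :
    ∀ h > (0:ℝ), ∀ ε > (0:ℝ), ∃ R > (0:ℝ), ∀ μ : Λ,
      Summable (fun l : {l : Λ // R < dist (y l) (y μ)} =>
        Real.exp (-A (h * dist (y l.1) (y μ)))) ∧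
      ∑' l : {l : Λ // R < dist (y l) (y μ)},
        Real.exp (-A (h * dist (y l.1) (y μ))) ≤ ε :=
  stmt_1_general n Λ y A hA_mono hA_sub hA_int hover
end

section
/- Let φ ∈ C^∞(ℝⁿ) be such that all derivatives ∂^α φ are integrable and ‖∂^α φ‖_{L¹} ≤ h^{−|α|} M_{|α|} · S for all multi-indices α, where S = sup_α h^{|α|} ‖∂^α φ‖_{L¹}/M_{|α|} < ∞ and h > 0. Then for all ξ ∈ ℝⁿ and k ∈ ℕ one has (h/√n)^k |ξ|^k |𝓕^{−1}φ(ξ)| ≤ M_k · S, where 𝓕^{−1} is the inverse Fourier transform. Consequently |𝓕^{−1}φ(ξ)| ≤ S · e^{−M(h|ξ|/√n)}, where M(ρ) = sup_{p∈ℕ} log(ρ^p / M_p) is the associated function of the sequence {M_p}. -/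
open MeasureTheory

/-- Partial derivative in the `i`-th coordinate direction. -/
noncomputable def pDeriv {n : ℕ} (i : Fin n)
    (f : EuclideanSpace ℝ (Fin n) → ℂ) : EuclideanSpace ℝ (Fin n) → ℂ :=
  fun x => fderiv ℝ f x (EuclideanSpace.single i (1 : ℝ))

/-- The multi-index derivative `∂^α f`. -/
noncomputable def multiDeriv {n : ℕ} (α : Fin n → ℕ)
    (f : EuclideanSpace ℝ (Fin n) → ℂ) : EuclideanSpace ℝ (Fin n) → ℂ :=
  (List.finRange n).foldr (fun i g => (pDeriv i)^[α i] g) f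

namespace StmtAux

open Real FourierTransform

lemma coord_le_norm {n : ℕ} (v : EuclideanSpace ℝ (Fin n)) (j : Fin n) : |v j| ≤ ‖v‖ := by
  rw [EuclideanSpace.norm_eq]
  calc |v j| = Real.sqrt ((v j)^2) := (Real.sqrt_sq_eq_abs _).symm
    _ ≤ Real.sqrt (∑ i, v i ^ 2) := Real.sqrt_le_sqrt (Finset.single_le_sum (f := fun i => v i ^ 2)
        (fun i _ => sq_nonneg _) (Finset.mem_univ j))
    _ = _ := by simp [Real.norm_eq_abs, sq_abs]

lemma eucl_expand {n : ℕ} (v : EuclideanSpace ℝ (Fin n)) :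
    v = ∑ j, v j • EuclideanSpace.single j (1 : ℝ) := by
  ext m
  rw [WithLp.ofLp_sum, Finset.sum_apply]
  simp [EuclideanSpace.single_apply]

lemma pDeriv_contDiff {n : ℕ} (i : Fin n) {f : EuclideanSpace ℝ (Fin n) → ℂ}
    (hf : ContDiff ℝ (⊤ : ℕ∞) f) : ContDiff ℝ (⊤ : ℕ∞) (pDeriv i f) := by
  have : pDeriv i f
      = fun x => (ContinuousLinearMap.apply ℝ ℂ (EuclideanSpace.single i (1:ℝ))) (fderiv ℝ f x) :=
    rfl
  rw [this]
  exact (ContinuousLinearMap.apply ℝ ℂ _).contDiff.comp (hf.fderiv_right (m := (⊤ : ℕ∞)) (by simp))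

lemma pDeriv_iterate_contDiff {n : ℕ} (i : Fin n) (m : ℕ) {f : EuclideanSpace ℝ (Fin n) → ℂ}
    (hf : ContDiff ℝ (⊤ : ℕ∞) f) : ContDiff ℝ (⊤ : ℕ∞) ((pDeriv i)^[m] f) := by
  induction m generalizing f with
  | zero => simpa using hf
  | succ m ih =>
    rw [Function.iterate_succ_apply]
    exact ih (pDeriv_contDiff i hf)

lemma pDeriv_comm {n : ℕ} (i j : Fin n) {f : EuclideanSpace ℝ (Fin n) → ℂ}
    (hf : ContDiff ℝ (⊤ : ℕ∞) f) : pDeriv j (pDeriv i f) = pDeriv i (pDeriv j f) := by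
  have hd : Differentiable ℝ (fderiv ℝ f) := (hf.fderiv_right (m := (⊤ : ℕ∞)) (by simp)).differentiable (by simp)
  have key : ∀ (v w : EuclideanSpace ℝ (Fin n)) (x : EuclideanSpace ℝ (Fin n)),
      fderiv ℝ (fun y => fderiv ℝ f y v) x w = fderiv ℝ (fderiv ℝ f) x w v := by
    intro v w x
    have : fderiv ℝ (fun y => (ContinuousLinearMap.apply ℝ ℂ v) (fderiv ℝ f y)) x
        = (ContinuousLinearMap.apply ℝ ℂ v).comp (fderiv ℝ (fderiv ℝ f) x) :=
      ((ContinuousLinearMap.apply ℝ ℂ v).hasFDerivAt.comp x (hd x).hasFDerivAt).fderiv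
    have := congrArg (fun L => L w) this
    simpa using this
  funext x
  have hsymm : fderiv ℝ (fderiv ℝ f) x (EuclideanSpace.single j 1) (EuclideanSpace.single i 1)
      = fderiv ℝ (fderiv ℝ f) x (EuclideanSpace.single i 1) (EuclideanSpace.single j 1) :=
    (hf.contDiffAt.isSymmSndFDerivAt (by rw [minSmoothness_of_isRCLikeNormedField]; exact WithTop.coe_le_coe.2 le_top)).eq _ _
  show fderiv ℝ (fun y => fderiv ℝ f y (EuclideanSpace.single i 1)) x (EuclideanSpace.single j 1)
      = fderiv ℝ (fun y => fderiv ℝ f y (EuclideanSpace.single j 1)) x (EuclideanSpace.single i 1)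
  rw [key, key, hsymm]

lemma pDeriv_comm_iterate {n : ℕ} (i j : Fin n) (m : ℕ) {f : EuclideanSpace ℝ (Fin n) → ℂ}
    (hf : ContDiff ℝ (⊤ : ℕ∞) f) :
    pDeriv j ((pDeriv i)^[m] f) = (pDeriv i)^[m] (pDeriv j f) := by
  induction m generalizing f with
  | zero => simp
  | succ m ih =>
    rw [Function.iterate_succ_apply, ih (pDeriv_contDiff i hf),
      pDeriv_comm i j hf, ← Function.iterate_succ_apply]

lemma foldr_contDiff {n : ℕ} (α : Fin n → ℕ) (l : List (Fin n))
    {f : EuclideanSpace ℝ (Fin n) → ℂ} (hf : ContDiff ℝ (⊤ : ℕ∞) f) :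
    ContDiff ℝ (⊤ : ℕ∞) (l.foldr (fun j g => (pDeriv j)^[α j] g) f) := by
  induction l with
  | nil => simpa using hf
  | cons a t ih => exact pDeriv_iterate_contDiff a (α a) ih

lemma foldr_congr {n : ℕ} (α β : Fin n → ℕ) (l : List (Fin n))
    (f : EuclideanSpace ℝ (Fin n) → ℂ) (hl : ∀ j ∈ l, α j = β j) :
    l.foldr (fun j g => (pDeriv j)^[α j] g) f = l.foldr (fun j g => (pDeriv j)^[β j] g) f := by
  induction l with
  | nil => rfl
  | cons a t ih =>
    simp only [List.foldr_cons]
    rw [hl a List.mem_cons_self, ih (fun j hj => hl j (List.mem_cons_of_mem a hj))]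

lemma foldr_add_single {n : ℕ} (i : Fin n) (α : Fin n → ℕ)
    {f : EuclideanSpace ℝ (Fin n) → ℂ} (hf : ContDiff ℝ (⊤ : ℕ∞) f) :
    ∀ l : List (Fin n), l.Nodup → i ∈ l →
    l.foldr (fun j g => (pDeriv j)^[α j + (Pi.single i 1 : Fin n → ℕ) j] g) f =
      pDeriv i (l.foldr (fun j g => (pDeriv j)^[α j] g) f) := by
  intro l
  induction l with
  | nil => intro _ hi; exact absurd hi List.not_mem_nil
  | cons a t ih =>
    intro hnd hmem
    have hand : a ∉ t ∧ t.Nodup := List.nodup_cons.1 hnd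
    simp only [List.foldr_cons]
    rcases List.mem_cons.1 hmem with rfl | hit
    · have ht : t.foldr (fun j g => (pDeriv j)^[α j + (Pi.single i 1 : Fin n → ℕ) j] g) f
          = t.foldr (fun j g => (pDeriv j)^[α j] g) f := by
        apply foldr_congr (fun j => α j + (Pi.single i 1 : Fin n → ℕ) j) α
        intro j hj
        have hji : j ≠ i := fun hja => hand.1 (hja ▸ hj)
        simp [Pi.single_eq_of_ne hji]
      rw [ht]
      have h2 : α i + (Pi.single i 1 : Fin n → ℕ) i = α i + 1 := by simp
      rw [h2, Function.iterate_succ_apply']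
    · have hai : a ≠ i := fun hai2 => hand.1 (hai2 ▸ hit)
      have h2 : α a + (Pi.single i 1 : Fin n → ℕ) a = α a := by simp [Pi.single_eq_of_ne hai]
      rw [h2, ih hand.2 hit,
        ← pDeriv_comm_iterate a i (α a) (foldr_contDiff α t hf)]

lemma multiDeriv_add_single {n : ℕ} (i : Fin n) (α : Fin n → ℕ)
    {f : EuclideanSpace ℝ (Fin n) → ℂ} (hf : ContDiff ℝ (⊤ : ℕ∞) f) :
    multiDeriv (α + Pi.single i 1) f = pDeriv i (multiDeriv α f) := by
  have := foldr_add_single i α hf (List.finRange n) (List.nodup_finRange n) (List.mem_finRange i)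
  exact this

lemma multiDeriv_zero {n : ℕ} (f : EuclideanSpace ℝ (Fin n) → ℂ) :
    multiDeriv 0 f = f := by
  unfold multiDeriv
  induction (List.finRange n) with
  | nil => rfl
  | cons a t ih => simpa using ih

lemma multiDeriv_single {n : ℕ} (i : Fin n) (k : ℕ)
    {f : EuclideanSpace ℝ (Fin n) → ℂ} (hf : ContDiff ℝ (⊤ : ℕ∞) f) :
    multiDeriv (Pi.single i k) f = (pDeriv i)^[k] f := by
  induction k with
  | zero => simpa using multiDeriv_zero f
  | succ k ih =>
    have hsingle : (Pi.single i (k+1) : Fin n → ℕ) = Pi.single i k + Pi.single i 1 := by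
      funext j
      by_cases hj : j = i
      · subst hj; simp
      · simp [Pi.single_eq_of_ne hj]
    rw [hsingle, multiDeriv_add_single i _ hf, ih, Function.iterate_succ_apply']

lemma pDeriv_iterate_eq_multiDeriv {n : ℕ} (i j : Fin n) (m : ℕ)
    {f : EuclideanSpace ℝ (Fin n) → ℂ} (hf : ContDiff ℝ (⊤ : ℕ∞) f) :
    pDeriv j ((pDeriv i)^[m] f) = multiDeriv (Pi.single i m + Pi.single j 1) f := by
  rw [multiDeriv_add_single j _ hf, multiDeriv_single i m hf]

lemma fderiv_integrable {n : ℕ} {g : EuclideanSpace ℝ (Fin n) → ℂ} (hg : ContDiff ℝ (⊤ : ℕ∞) g)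
    (hint : ∀ j, Integrable (pDeriv j g)) : Integrable (fderiv ℝ g) := by
  have hcont : Continuous (fderiv ℝ g) := (hg.fderiv_right (m := (⊤ : ℕ∞)) (by simp)).continuous
  apply Integrable.mono' (g := fun x => ∑ j, ‖pDeriv j g x‖)
    (integrable_finset_sum _ fun j _ => (hint j).norm) hcont.aestronglyMeasurable
  filter_upwards with x
  apply ContinuousLinearMap.opNorm_le_bound _ (by positivity)
  intro v
  conv_lhs => rw [eucl_expand v]
  rw [map_sum]
  refine (norm_sum_le _ _).trans ?_
  rw [Finset.sum_mul]
  apply Finset.sum_le_sum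
  intro j _
  rw [(fderiv ℝ g x).map_smul, norm_smul]
  calc ‖v j‖ * ‖fderiv ℝ g x (EuclideanSpace.single j 1)‖
      ≤ ‖v‖ * ‖pDeriv j g x‖ := by
        apply mul_le_mul _ le_rfl (norm_nonneg _) (norm_nonneg _)
        simpa using coord_le_norm v j
    _ = ‖pDeriv j g x‖ * ‖v‖ := mul_comm _ _

lemma fourier_step {n : ℕ} (i : Fin n) {g : EuclideanSpace ℝ (Fin n) → ℂ} (hg : ContDiff ℝ (⊤ : ℕ∞) g)
    (hgi : Integrable g) (hfd : Integrable (fderiv ℝ g)) (w : EuclideanSpace ℝ (Fin n)) :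
    ‖𝓕 (pDeriv i g) w‖ = (2 * π * |w i|) * ‖𝓕 g w‖ := by
  have h1 : 𝓕 (pDeriv i g) w = (𝓕 (fderiv ℝ g) w) (EuclideanSpace.single i 1) :=
    (Real.fourier_continuousLinearMap_apply hfd).symm
  rw [h1, Real.fourier_fderiv hgi (hg.differentiable (by simp)) hfd]
  simp only [VectorFourier.fourierSMulRight_apply]
  rw [norm_smul, norm_smul]
  simp [Complex.norm_real, abs_of_nonneg Real.pi_pos.le, EuclideanSpace.inner_single_right,
    innerSL_apply_apply, real_inner_comm]
  rw [show ((innerSL ℝ) w) (EuclideanSpace.single i 1) = w i by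
    rw [innerSL_apply_apply, EuclideanSpace.inner_single_right]; simp]
  ring_nf

end StmtAux

open StmtAux FourierTransform Real

/-- If all derivatives of `φ` satisfy `‖∂^α φ‖_{L¹} ≤ h^{−|α|} M_{|α|} S`, then
`(h/√n)^k |ξ|^k |𝓕⁻¹φ(ξ)| ≤ M_k S`, and consequently
`|𝓕⁻¹φ(ξ)| ≤ S e^{−M(h|ξ|/√n)}` with `M(ρ) = sup_p log(ρ^p/M_p)`. -/
theorem stmt_2 (n : ℕ) (hn : 0 < n) (M : ℕ → ℝ) (hMpos : ∀ p, 0 < M p) (hM0 : M 0 = 1)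
    (h : ℝ) (hh : 0 < h) (φ : EuclideanSpace ℝ (Fin n) → ℂ)
    (hφ : ContDiff ℝ (⊤ : ℕ∞) φ)
    (hint : ∀ α : Fin n → ℕ, Integrable (multiDeriv α φ))
    (S : ℝ)
    (hS : ∀ α : Fin n → ℕ,
      (∫ x, ‖multiDeriv α φ x‖) ≤ M (∑ i, α i) * S / h ^ (∑ i, α i)) :
    ∀ ξ : EuclideanSpace ℝ (Fin n), ∀ k : ℕ,
      (h / Real.sqrt n) ^ k * ‖ξ‖ ^ k * ‖FourierTransformInv.fourierInv φ ξ‖ ≤ M k * S ∧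
      ‖FourierTransformInv.fourierInv φ ξ‖ ≤
        S * Real.exp (-(⨆ p : ℕ, Real.log ((h * ‖ξ‖ / Real.sqrt n) ^ p / M p))) := by
  intro ξ k
  have hsn : (0:ℝ) < Real.sqrt n := Real.sqrt_pos.2 (by exact_mod_cast hn)
  have hS0 : 0 ≤ S := by
    have h0 := hS 0
    simp only [Pi.zero_apply, Finset.sum_const_zero, hM0, pow_zero, one_mul, div_one] at h0
    exact le_trans (integral_nonneg fun x => norm_nonneg _) h0
  have hint_it : ∀ (i : Fin n) (m : ℕ), Integrable ((pDeriv i)^[m] φ) := by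
    intro i m
    have := hint (Pi.single i m)
    rwa [multiDeriv_single i m hφ] at this
  have hsm : ∀ (i : Fin n) (m : ℕ), ContDiff ℝ (⊤ : ℕ∞) ((pDeriv i)^[m] φ) :=
    fun i m => pDeriv_iterate_contDiff i m hφ
  have hfd : ∀ (i : Fin n) (m : ℕ), Integrable (fderiv ℝ ((pDeriv i)^[m] φ)) := by
    intro i m
    apply fderiv_integrable (hsm i m)
    intro j
    rw [pDeriv_iterate_eq_multiDeriv i j m hφ]
    exact hint _
  have key : ∀ (i : Fin n) (m : ℕ) (w : EuclideanSpace ℝ (Fin n)),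
      ‖𝓕 ((pDeriv i)^[m] φ) w‖ = (2*π*|w i|)^m * ‖𝓕 φ w‖ := by
    intro i m w
    induction m with
    | zero => simp
    | succ m ih =>
      rw [Function.iterate_succ_apply',
        fourier_step i (hsm i m) (hint_it i m) (hfd i m) w, ih, pow_succ]
      ring
  have part1 : ∀ k : ℕ,
      (h / Real.sqrt n) ^ k * ‖ξ‖ ^ k * ‖FourierTransformInv.fourierInv φ ξ‖ ≤ M k * S := by
    intro k
    obtain ⟨i, -, hi⟩ := Finset.exists_max_image (Finset.univ : Finset (Fin n))
      (fun j => |ξ j|) ⟨⟨0, hn⟩, Finset.mem_univ _⟩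
    have hxi : ‖ξ‖ ≤ Real.sqrt n * |ξ i| := by
      rw [EuclideanSpace.norm_eq]
      have hsum : (∑ j, ‖ξ j‖^2) ≤ (n : ℝ) * |ξ i|^2 := by
        calc (∑ j, ‖ξ j‖^2) ≤ ∑ _j : Fin n, |ξ i|^2 := Finset.sum_le_sum (fun j _ => by
              rw [Real.norm_eq_abs]
              exact pow_le_pow_left₀ (abs_nonneg _) (hi j (Finset.mem_univ j)) 2)
          _ = (n : ℝ) * |ξ i|^2 := by simp [mul_comm]
      calc Real.sqrt (∑ j, ‖ξ j‖^2) ≤ Real.sqrt ((n:ℝ) * |ξ i|^2) := Real.sqrt_le_sqrt hsum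
        _ = Real.sqrt n * |ξ i| := by
            rw [Real.sqrt_mul (Nat.cast_nonneg n), Real.sqrt_sq (abs_nonneg _)]
    have hF : FourierTransformInv.fourierInv φ ξ = 𝓕 φ (-ξ) :=
      Real.fourierInv_eq_fourier_neg φ ξ
    have hw : |(-ξ : EuclideanSpace ℝ (Fin n)) i| = |ξ i| := by
      show |(-ξ i)| = _
      rw [abs_neg]
    have hbound : (2*π*|ξ i|)^k * ‖𝓕 φ (-ξ)‖ ≤ M k * S / h ^ k := by
      have hk := key i k (-ξ)
      rw [hw] at hk
      rw [← hk]
      calc ‖𝓕 ((pDeriv i)^[k] φ) (-ξ)‖ ≤ ∫ x, ‖(pDeriv i)^[k] φ x‖ :=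
          VectorFourier.norm_fourierIntegral_le_integral_norm _ _ _ _ _
        _ = ∫ x, ‖multiDeriv (Pi.single i k) φ x‖ := by rw [multiDeriv_single i k hφ]
        _ ≤ M k * S / h^k := by
            have := hS (Pi.single i k)
            rwa [Finset.sum_pi_single', if_pos (Finset.mem_univ i)] at this
    rw [hF]
    have h2pi : |ξ i| ≤ 2*π*|ξ i| := by nlinarith [Real.pi_gt_three, abs_nonneg (ξ i)]
    calc (h/Real.sqrt n)^k * ‖ξ‖^k * ‖𝓕 φ (-ξ)‖
        ≤ (h/Real.sqrt n)^k * (Real.sqrt n * |ξ i|)^k * ‖𝓕 φ (-ξ)‖ :=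
          mul_le_mul_of_nonneg_right (mul_le_mul_of_nonneg_left
            (pow_le_pow_left₀ (norm_nonneg ξ) hxi k) (by positivity)) (norm_nonneg _)
      _ = h^k * (|ξ i|^k * ‖𝓕 φ (-ξ)‖) := by
          have heq : h / Real.sqrt n * (Real.sqrt n * |ξ i|) = h * |ξ i| := by
            field_simp
          rw [← mul_pow, heq, mul_pow, mul_assoc]
      _ ≤ h^k * ((2*π*|ξ i|)^k * ‖𝓕 φ (-ξ)‖) := by
          gcongr
      _ ≤ h^k * (M k * S / h^k) := by
          gcongr
      _ = M k * S := by field_simp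
  refine ⟨part1 k, ?_⟩
  set ρ : ℝ := h * ‖ξ‖ / Real.sqrt n with hρdef
  set F : ℝ := ‖FourierTransformInv.fourierInv φ ξ‖ with hFdef
  have hFS : F ≤ S := by
    have := part1 0
    simpa [hM0] using this
  rcases eq_or_lt_of_le (norm_nonneg (FourierTransformInv.fourierInv φ ξ)) with hF0 | hF0
  · rw [← hFdef] at hF0
    rw [← hF0]
    positivity
  · rw [← hFdef] at hF0
    have hSpos : 0 < S := lt_of_lt_of_le hF0 hFS
    have hlog : ∀ p : ℕ, Real.log (ρ^p / M p) ≤ Real.log (S / F) := by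
      intro p
      have hρξ : ρ^p = (h/Real.sqrt n)^p * ‖ξ‖^p := by
        rw [← mul_pow, hρdef]
        congr 1
        ring
      have hpart : ρ^p * F ≤ M p * S := by
        rw [hρξ]
        exact part1 p
      have hratio : ρ^p / M p ≤ S / F :=
        (div_le_div_iff₀ (hMpos p) hF0).2 (by linarith)
      rcases le_or_gt (ρ^p) 0 with hρ0 | hρ0
      · have hρ0' : ρ^p = 0 := le_antisymm hρ0 (by positivity)
        rw [hρ0', zero_div, Real.log_zero]
        apply Real.log_nonneg
        rw [le_div_iff₀ hF0]
        linarith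
      · exact Real.log_le_log (div_pos hρ0 (hMpos p)) hratio
    have hsup : (⨆ p : ℕ, Real.log (ρ^p / M p)) ≤ Real.log (S / F) := ciSup_le hlog
    have hexp : Real.exp (⨆ p : ℕ, Real.log (ρ^p / M p)) ≤ S / F :=
      le_trans (Real.exp_le_exp.2 hsup) (le_of_eq (Real.exp_log (div_pos hSpos hF0)))
    rw [Real.exp_neg, ← div_eq_mul_inv, le_div_iff₀ (Real.exp_pos _)]
    calc F * Real.exp (⨆ p : ℕ, Real.log (ρ^p / M p)) ≤ F * (S / F) := by
          gcongr
      _ = S := by field_simp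
end

section
/- Let η: ℝⁿ → (0,∞) be a measurable weight such that η(ξ) ≤ C e^{M(τ|ξ|)} for some C, τ > 0, where M(·) is the associated function of a sequence {M_p} satisfying (M.1), (M.2), (M.6). Then for every h > τ√n·H (with H the constant from (M.2)), any smooth function φ with sup_α h^{|α|}‖∂^α φ‖_{L¹}/M_{|α|} =: ‖φ‖ < ∞ satisfies ‖η · 𝓕^{−1}φ‖_{L¹(ℝⁿ)} ≤ C' ‖φ‖ for a constant C' independent of φ. In particular, the space 𝒟^*_{L¹}(ℝⁿ) is continuously included in the Fourier image 𝓕L¹_η of the weighted L¹ space. -/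
open MeasureTheory

/-- The associated function `M(ρ) = sup_p log(ρ^p/M_p)` of the sequence `{M_p}`. -/
noncomputable def assocFn (M : ℕ → ℝ) (ρ : ℝ) : ℝ :=
  ⨆ p : ℕ, Real.log (ρ ^ p / M p)

section Aux

variable {n : ℕ}

local notation "V" => EuclideanSpace ℝ (Fin n)

lemma contDiff_pDeriv {f : V → ℂ} (hf : ContDiff ℝ (⊤ : ℕ∞) f) (i : Fin n) :
    ContDiff ℝ (⊤ : ℕ∞) (pDeriv i f) :=
  (hf.fderiv_right (by simp)).clm_apply contDiff_const

lemma contDiff_pDeriv_iterate {f : V → ℂ} (hf : ContDiff ℝ (⊤ : ℕ∞) f) (i : Fin n) (k : ℕ) :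
    ContDiff ℝ (⊤ : ℕ∞) ((pDeriv i)^[k] f) := by
  induction k with
  | zero => exact hf
  | succ k ih => rw [Function.iterate_succ_apply']; exact contDiff_pDeriv ih i

lemma pDeriv_snd {f : V → ℂ} (hf : ContDiff ℝ (⊤ : ℕ∞) f) (i j : Fin n) (x : V) :
    pDeriv i (pDeriv j f) x
      = fderiv ℝ (fderiv ℝ f) x (EuclideanSpace.single i 1) (EuclideanSpace.single j 1) := by
  have hd : DifferentiableAt ℝ (fderiv ℝ f) x :=
    ((hf.fderiv_right (m := (⊤ : ℕ∞)) (by simp)).differentiable (by simp)).differentiableAt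
  show fderiv ℝ (fun y => fderiv ℝ f y (EuclideanSpace.single j 1)) x
      (EuclideanSpace.single i 1) = _
  rw [fderiv_clm_apply hd (differentiableAt_const _)]
  simp

lemma pDeriv_comm {f : V → ℂ} (hf : ContDiff ℝ (⊤ : ℕ∞) f) (i j : Fin n) :
    pDeriv i (pDeriv j f) = pDeriv j (pDeriv i f) := by
  funext x
  rw [pDeriv_snd hf i j x, pDeriv_snd hf j i x]
  exact (hf.contDiffAt.isSymmSndFDerivAt (by rw [minSmoothness_of_isRCLikeNormedField]; exact WithTop.coe_le_coe.2 (le_top : (2:ℕ∞) ≤ ⊤))).eq _ _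

lemma pDeriv_iterate_comm {f : V → ℂ} (hf : ContDiff ℝ (⊤ : ℕ∞) f) (i j : Fin n) (k : ℕ) :
    pDeriv j ((pDeriv i)^[k] f) = (pDeriv i)^[k] (pDeriv j f) := by
  induction k with
  | zero => rfl
  | succ k ih =>
      rw [Function.iterate_succ_apply', Function.iterate_succ_apply',
        pDeriv_comm (contDiff_pDeriv_iterate hf i k) j i, ih]

lemma contDiff_foldr (α : Fin n → ℕ) (l : List (Fin n)) {f : V → ℂ} (hf : ContDiff ℝ (⊤ : ℕ∞) f) :
    ContDiff ℝ (⊤ : ℕ∞) (l.foldr (fun i g => (pDeriv i)^[α i] g) f) := by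
  induction l with
  | nil => exact hf
  | cons i t ih => exact contDiff_pDeriv_iterate ih i (α i)

lemma foldr_congr {α β : Fin n → ℕ} (l : List (Fin n)) (h : ∀ i ∈ l, α i = β i) (f : V → ℂ) :
    l.foldr (fun i g => (pDeriv i)^[α i] g) f = l.foldr (fun i g => (pDeriv i)^[β i] g) f := by
  induction l with
  | nil => rfl
  | cons i t ih =>
      simp only [List.foldr_cons]
      rw [ih fun x hx => h x (List.mem_cons_of_mem i hx), h i (List.mem_cons_self)]

lemma foldr_zero {α : Fin n → ℕ} (l : List (Fin n)) (h : ∀ i ∈ l, α i = 0) (f : V → ℂ) :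
    l.foldr (fun i g => (pDeriv i)^[α i] g) f = f := by
  induction l with
  | nil => rfl
  | cons i t ih =>
      simp only [List.foldr_cons, h i (List.mem_cons_self),
        ih fun x hx => h x (List.mem_cons_of_mem i hx), Function.iterate_zero_apply]

lemma multiDeriv_single (i : Fin n) (k : ℕ) (f : V → ℂ) :
    multiDeriv (fun j => if j = i then k else 0) f = (pDeriv i)^[k] f := by
  unfold multiDeriv
  have hnd : (List.finRange n).Nodup := List.nodup_finRange n
  have hmem : i ∈ List.finRange n := List.mem_finRange i
  revert hnd hmem
  generalize (List.finRange n) = l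
  induction l with
  | nil => intro _ h; exact absurd h (List.not_mem_nil)
  | cons a t ih =>
      intro hnd hmem
      simp only [List.foldr_cons]
      rcases List.mem_cons.1 hmem with h | h
      · subst h
        rw [foldr_zero t (fun x hx => by
          simp only [if_neg (fun hxa : x = i => (List.nodup_cons.1 hnd).1 (hxa ▸ hx))]) f]
        simp
      · have hne : a ≠ i := fun hai => (List.nodup_cons.1 hnd).1 (hai ▸ h)
        rw [if_neg hne, ih (List.nodup_cons.1 hnd).2 h, Function.iterate_zero_apply]

lemma foldr_add_single (α : Fin n → ℕ) (j : Fin n) {f : V → ℂ} (hf : ContDiff ℝ (⊤ : ℕ∞) f)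
    (l : List (Fin n)) (hnd : l.Nodup) (hj : j ∈ l) :
    l.foldr (fun i g => (pDeriv i)^[α i + if i = j then 1 else 0] g) f
      = pDeriv j (l.foldr (fun i g => (pDeriv i)^[α i] g) f) := by
  induction l with
  | nil => exact absurd hj (List.not_mem_nil)
  | cons a t ih =>
      have hna : a ∉ t := (List.nodup_cons.1 hnd).1
      have hndt : t.Nodup := (List.nodup_cons.1 hnd).2
      simp only [List.foldr_cons]
      rcases List.mem_cons.1 hj with h | h
      · subst h
        rw [foldr_congr (α := fun i => α i + if i = j then 1 else 0) (β := α) t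
          (fun x hx => by simp only [if_neg (fun hxa : x = j => hna (hxa ▸ hx)), Nat.add_zero]) f]
        rw [if_pos rfl, Function.iterate_succ_apply']
      · have hne : a ≠ j := fun haj => hna (haj ▸ h)
        rw [if_neg hne, Nat.add_zero, ih hndt h,
          pDeriv_iterate_comm (contDiff_foldr α t hf) a j (α a)]

lemma multiDeriv_add_single (α : Fin n → ℕ) (j : Fin n) {f : V → ℂ} (hf : ContDiff ℝ (⊤ : ℕ∞) f) :
    multiDeriv (fun i => α i + if i = j then 1 else 0) f = pDeriv j (multiDeriv α f) :=
  foldr_add_single α j hf _ (List.nodup_finRange n) (List.mem_finRange j)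

lemma abs_coord_le_norm (v : V) (i : Fin n) : |v i| ≤ ‖v‖ := by
  rw [EuclideanSpace.norm_eq, ← Real.sqrt_sq_eq_abs]
  apply Real.sqrt_le_sqrt
  have : (v i) ^ 2 = ‖v i‖ ^ 2 := by rw [Real.norm_eq_abs, sq_abs]
  rw [this]
  exact Finset.single_le_sum (fun j _ => sq_nonneg ‖v j‖) (Finset.mem_univ i)

lemma exists_coord_max (hn : 0 < n) (v : V) :
    ∃ i : Fin n, ‖v‖ ≤ Real.sqrt n * |v i| := by
  obtain ⟨i, -, hi⟩ := Finset.exists_max_image Finset.univ (fun i => |v i|)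
    ⟨⟨0, hn⟩, Finset.mem_univ _⟩
  refine ⟨i, ?_⟩
  rw [EuclideanSpace.norm_eq]
  have h1 : ∑ j, ‖v j‖ ^ 2 ≤ (n : ℝ) * |v i| ^ 2 := by
    calc ∑ j, ‖v j‖ ^ 2 ≤ ∑ _j : Fin n, |v i| ^ 2 := by
          refine Finset.sum_le_sum fun j _ => ?_
          rw [Real.norm_eq_abs]
          exact pow_le_pow_left₀ (abs_nonneg _) (hi j (Finset.mem_univ _)) 2
      _ = (n : ℝ) * |v i| ^ 2 := by simp [Finset.sum_const, mul_comm]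
  calc Real.sqrt (∑ j, ‖v j‖ ^ 2) ≤ Real.sqrt ((n : ℝ) * |v i| ^ 2) := Real.sqrt_le_sqrt h1
    _ = Real.sqrt n * |v i| := by
        rw [Real.sqrt_mul (Nat.cast_nonneg n), Real.sqrt_sq_eq_abs, abs_abs]

lemma clm_norm_le_sum (L : EuclideanSpace ℝ (Fin n) →L[ℝ] ℂ) :
    ‖L‖ ≤ ∑ j : Fin n, ‖L (EuclideanSpace.single j 1)‖ := by
  refine L.opNorm_le_bound (Finset.sum_nonneg fun _ _ => norm_nonneg _) fun v => ?_
  have hv : v = ∑ j : Fin n, v j • (EuclideanSpace.single j (1:ℝ)) := by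
    conv_lhs => rw [← (EuclideanSpace.basisFun (Fin n) ℝ).sum_repr v]
    congr 1
    funext j
    rw [EuclideanSpace.basisFun_apply, EuclideanSpace.basisFun_repr]
  calc ‖L v‖ = ‖∑ j : Fin n, v j • L (EuclideanSpace.single j 1)‖ := by
        conv_lhs => rw [hv]
        rw [map_sum]
        simp only [_root_.map_smul]
    _ ≤ ∑ j : Fin n, ‖v j • L (EuclideanSpace.single j 1)‖ := norm_sum_le _ _
    _ ≤ ∑ j : Fin n, ‖L (EuclideanSpace.single j 1)‖ * ‖v‖ := by
        refine Finset.sum_le_sum fun j _ => ?_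
        rw [norm_smul, Real.norm_eq_abs, mul_comm]
        exact mul_le_mul_of_nonneg_left (abs_coord_le_norm v j) (norm_nonneg _)
    _ = (∑ j : Fin n, ‖L (EuclideanSpace.single j 1)‖) * ‖v‖ := by
        rw [Finset.sum_mul]

lemma fourier_clm_apply {f : EuclideanSpace ℝ (Fin n) → (EuclideanSpace ℝ (Fin n) →L[ℝ] ℂ)}
    (hf : Integrable f) (w a : EuclideanSpace ℝ (Fin n)) :
    FourierTransform.fourier (E := V → ℂ) (fun x => f x a) w
      = (FourierTransform.fourier (E := V → (V →L[ℝ] ℂ)) f w) a := by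
  rw [Real.fourier_eq, Real.fourier_eq,
    ContinuousLinearMap.integral_apply ((Real.fourierIntegral_convergent_iff w).2 hf)]
  rfl

lemma norm_fourier_pDeriv {f : V → ℂ} (hf : Integrable f) (h'f : ContDiff ℝ (⊤ : ℕ∞) f)
    (hf' : Integrable (fderiv ℝ f)) (i : Fin n) (w : V) :
    ‖FourierTransform.fourier (E := V → ℂ) (pDeriv i f) w‖
      = (2 * Real.pi * |w i|) * ‖FourierTransform.fourier (E := V → ℂ) f w‖ := by
  have h1 : FourierTransform.fourier (E := V → ℂ) (pDeriv i f) w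
      = (FourierTransform.fourier (E := V → (V →L[ℝ] ℂ)) (fderiv ℝ f) w)
          (EuclideanSpace.single i 1) :=
    fourier_clm_apply hf' w _
  rw [h1, Real.fourier_fderiv hf (h'f.differentiable (by simp)) hf',
    VectorFourier.fourierSMulRight_apply]
  have h2 : ((-innerSL ℝ) w) (EuclideanSpace.single i (1:ℝ)) = -(w i) := by
    simp [EuclideanSpace.inner_single_right]
  rw [h2, norm_smul, norm_smul]
  simp [Complex.norm_I, abs_of_nonneg Real.pi_pos.le, Real.pi_pos.le]
  ring

end Aux

lemma one_add_pow_le {x : ℝ} (hx : 0 ≤ x) (k : ℕ) :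
    (1 + x) ^ k ≤ 2 ^ k * (1 + x ^ k) := by
  rcases le_total x 1 with hx1 | hx1
  · have h1 : (1+x)^k ≤ 2^k := pow_le_pow_left₀ (by linarith) (by linarith) k
    have h2 : (0:ℝ) ≤ x^k := pow_nonneg hx k
    have h3 : (0:ℝ) < 2^k := pow_pos two_pos k
    nlinarith
  · have h1 : (1+x)^k ≤ (2*x)^k := pow_le_pow_left₀ (by linarith) (by linarith) k
    have h3 : (0:ℝ) < 2^k := pow_pos two_pos k
    rw [mul_pow] at h1
    nlinarith [pow_nonneg hx k]

lemma div_mul_cancel_aux (a D F : ℝ) (hD : D ≠ 0) (hF : F ≠ 0) :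
    a / (D * F) * F = a * D⁻¹ := by
  field_simp

set_option maxHeartbeats 2000000 in
open FourierTransform in
/-- If `η(ξ) ≤ C e^{M(τ|ξ|)}` for a sequence `{M_p}` satisfying `(M.1)`, `(M.2)`,
`(M.6)`, then for every `h > τ√n H` there is `C' > 0` such that any smooth `φ` whose
derivatives satisfy `‖∂^α φ‖_{L¹} ≤ h^{−|α|} M_{|α|} S` satisfies
`‖η 𝓕⁻¹φ‖_{L¹} ≤ C' S`; this expresses the continuous inclusion
`𝒟^*_{L¹}(ℝⁿ) ⊆ 𝓕L¹_η`. -/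
theorem stmt_3 (n : ℕ) (hn : 0 < n) (M : ℕ → ℝ) (hMpos : ∀ p, 0 < M p)
    (hM0 : M 0 = 1) (hM1 : M 1 = 1)
    (hM1convex : ∀ p : ℕ, (M (p + 1)) ^ 2 ≤ M p * M (p + 2))
    (c₀ H : ℝ) (hc₀ : 1 ≤ c₀) (hH : 1 ≤ H)
    (hM2 : ∀ p q : ℕ, M (p + q) ≤ c₀ * H ^ (p + q) * M p * M q)
    (c₁ L₀ : ℝ) (hc₁ : 1 ≤ c₁) (hL₀ : 1 ≤ L₀)
    (hM6 : ∀ p : ℕ, (p.factorial : ℝ) ≤ c₁ * L₀ ^ p * M p)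
    (η : EuclideanSpace ℝ (Fin n) → ℝ) (hηmeas : Measurable η) (hηpos : ∀ x, 0 < η x)
    (C τ : ℝ) (hC : 0 < C) (hτ : 0 < τ)
    (hη : ∀ ξ, η ξ ≤ C * Real.exp (assocFn M (τ * ‖ξ‖))) :
    ∀ h : ℝ, τ * Real.sqrt n * H < h →
      ∃ C' > (0:ℝ), ∀ (φ : EuclideanSpace ℝ (Fin n) → ℂ) (S : ℝ),
        ContDiff ℝ (⊤ : ℕ∞) φ →
        (∀ α : Fin n → ℕ, Integrable (multiDeriv α φ)) →
        (∀ α : Fin n → ℕ,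
          (∫ x, ‖multiDeriv α φ x‖) ≤ M (∑ i, α i) * S / h ^ (∑ i, α i)) →
        (∫ ξ, η ξ * ‖(FourierTransformInv.fourierInv φ : EuclideanSpace ℝ (Fin n) → ℂ) ξ‖) ≤ C' * S := by
  intro h hh
  have hn1 : (1:ℝ) ≤ Real.sqrt n := by
    rw [show (1:ℝ) = Real.sqrt 1 by simp]
    exact Real.sqrt_le_sqrt (by exact_mod_cast hn)
  have hsq : 0 < Real.sqrt n := lt_of_lt_of_le one_pos hn1
  have hhpos : 0 < h := lt_trans (by positivity) hh
  -- the integrable majorant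
  set G : EuclideanSpace ℝ (Fin n) → ℝ := fun ξ => ((1 + τ * ‖ξ‖) ^ (n+1))⁻¹ with hGdef
  have hGpos : ∀ ξ, 0 < G ξ := fun ξ => by
    have : 0 < 1 + τ * ‖ξ‖ := by positivity
    positivity
  have hGint : Integrable G := by
    set m : ℝ := min 1 τ with hm
    have hmpos : 0 < m := lt_min one_pos hτ
    have hr : (Module.finrank ℝ (EuclideanSpace ℝ (Fin n)) : ℝ) < ((n:ℝ) + 1) := by
      rw [finrank_euclideanSpace_fin]; linarith
    have hbase : Integrable (fun ξ : EuclideanSpace ℝ (Fin n) => (1 + ‖ξ‖) ^ (-((n:ℝ)+1))) :=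
      integrable_one_add_norm hr
    refine (hbase.const_mul ((m ^ (n+1))⁻¹)).mono' ?_ (ae_of_all _ fun ξ => ?_)
    · apply Continuous.aestronglyMeasurable
      refine Continuous.inv₀ ?_ (fun ξ => by positivity)
      exact (continuous_const.add (continuous_const.mul continuous_norm)).pow (n+1)
    · have h1 : m * (1 + ‖ξ‖) ≤ 1 + τ * ‖ξ‖ := by
        rcases min_cases 1 τ with ⟨he, hle⟩ | ⟨he, hle⟩
        · rw [hm, he]; nlinarith [norm_nonneg ξ]
        · rw [hm, he]; nlinarith [norm_nonneg ξ, hτ]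
      have h2 : m ^ (n+1) * (1 + ‖ξ‖) ^ (n+1) ≤ (1 + τ * ‖ξ‖) ^ (n+1) := by
        rw [← mul_pow]
        exact pow_le_pow_left₀ (by positivity) h1 (n+1)
      have h3 : G ξ ≤ (m ^ (n+1))⁻¹ * ((1 + ‖ξ‖) ^ (-((n:ℝ)+1))) := by
        have hrpow : (1 + ‖ξ‖) ^ (-((n:ℝ)+1)) = ((1 + ‖ξ‖) ^ (n+1))⁻¹ := by
          rw [show (-((n:ℝ)+1)) = -(((n+1:ℕ)):ℝ) by push_cast; ring,
            Real.rpow_neg (by positivity), Real.rpow_natCast]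
        rw [hrpow, hGdef]
        rw [← mul_inv]
        refine inv_anti₀ (by positivity) h2
      have h4 : ‖G ξ‖ = G ξ := Real.norm_of_nonneg (hGpos ξ).le
      rw [h4]; exact h3
  set I₀ : ℝ := ∫ ξ, G ξ with hI₀def
  have hI₀ : 0 ≤ I₀ := integral_nonneg fun ξ => (hGpos ξ).le
  have hMn1 : 0 < M (n+1) := hMpos (n+1)
  set K₁ : ℝ := 2 ^ (n+1) * c₀ * (1 + M (n+1)) with hK₁def
  have hK₁ : 0 < K₁ := by positivity
  refine ⟨C * K₁ * (I₀ + 1), by positivity, ?_⟩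
  intro φ S hφ hint hbd
  -- S is nonnegative
  have hS : 0 ≤ S := by
    have h0 := hbd (fun _ => 0)
    have hmd : multiDeriv (fun _ => (0:ℕ)) φ = φ := foldr_zero _ (fun _ _ => rfl) φ
    rw [hmd] at h0
    simp only [Finset.sum_const_zero, pow_zero, hM0] at h0
    have : (0:ℝ) ≤ ∫ x, ‖φ x‖ := integral_nonneg fun x => norm_nonneg _
    linarith
  -- integrability and smoothness of coordinate iterates
  have hIter : ∀ (i : Fin n) (k : ℕ), Integrable ((pDeriv i)^[k] φ) := by
    intro i k
    have h1 := hint (fun j => if j = i then k else 0)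
    rwa [multiDeriv_single] at h1
  have hSmooth : ∀ (i : Fin n) (k : ℕ), ContDiff ℝ (⊤ : ℕ∞) ((pDeriv i)^[k] φ) :=
    fun i k => contDiff_pDeriv_iterate hφ i k
  have hFder : ∀ (i : Fin n) (k : ℕ), Integrable (fderiv ℝ ((pDeriv i)^[k] φ)) := by
    intro i k
    have hg : ContDiff ℝ (⊤ : ℕ∞) ((pDeriv i)^[k] φ) := hSmooth i k
    have hmeas : AEStronglyMeasurable (fderiv ℝ ((pDeriv i)^[k] φ)) volume :=
      (hg.continuous_fderiv (by simp)).aestronglyMeasurable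
    have hIntj : ∀ j : Fin n, Integrable (pDeriv j ((pDeriv i)^[k] φ)) := by
      intro j
      have h1 : pDeriv j ((pDeriv i)^[k] φ)
          = multiDeriv (fun x => (if x = i then k else 0) + if x = j then 1 else 0) φ := by
        rw [multiDeriv_add_single _ j hφ, multiDeriv_single]
      rw [h1]; exact hint _
    refine (integrable_finset_sum Finset.univ
      (fun j _ => (hIntj j).norm)).mono' hmeas (ae_of_all _ fun x => ?_)
    have hb := clm_norm_le_sum (fderiv ℝ ((pDeriv i)^[k] φ) x)
    exact hb
  have hFstep : ∀ (i : Fin n) (k : ℕ) (w : EuclideanSpace ℝ (Fin n)),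
      ‖FourierTransform.fourier (E := EuclideanSpace ℝ (Fin n) → ℂ) ((pDeriv i)^[k] φ) w‖
        = (2 * Real.pi * |w i|) ^ k * ‖FourierTransform.fourier (E := EuclideanSpace ℝ (Fin n) → ℂ) φ w‖ := by
    intro i k w
    induction k with
    | zero => simp
    | succ k ih =>
        have he : (pDeriv i)^[k+1] φ = pDeriv i ((pDeriv i)^[k] φ) :=
          Function.iterate_succ_apply' _ _ _
        rw [he, norm_fourier_pDeriv (hIter i k) (hSmooth i k) (hFder i k) i w, ih, pow_succ]
        ring
  have hbd2 : ∀ (i : Fin n) (k : ℕ), (∫ x, ‖(pDeriv i)^[k] φ x‖) ≤ M k * S / h ^ k := by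
    intro i k
    have h1 := hbd (fun j => if j = i then k else 0)
    rw [multiDeriv_single] at h1
    simpa using h1
  have hB : ∀ (k : ℕ) (w : EuclideanSpace ℝ (Fin n)),
      (h * ‖w‖ / Real.sqrt n) ^ k * ‖FourierTransform.fourier (E := EuclideanSpace ℝ (Fin n) → ℂ) φ w‖ ≤ M k * S := by
    intro k w
    obtain ⟨i, hi⟩ := exists_coord_max hn w
    have hF0 : ‖FourierTransform.fourier (E := EuclideanSpace ℝ (Fin n) → ℂ) ((pDeriv i)^[k] φ) w‖ ≤ M k * S / h ^ k :=
      le_trans (VectorFourier.norm_fourierIntegral_le_integral_norm _ _ _ _ _) (hbd2 i k)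
    have hpi : 1 ≤ 2 * Real.pi := by nlinarith [Real.pi_gt_three]
    have h3 : ‖w‖ / Real.sqrt n ≤ |w i| := by
      rw [div_le_iff₀ hsq]
      calc ‖w‖ ≤ Real.sqrt n * |w i| := hi
        _ = |w i| * Real.sqrt n := by ring
    have h2 : h * ‖w‖ / Real.sqrt n ≤ h * (2 * Real.pi * |w i|) := by
      have h4 : h * ‖w‖ / Real.sqrt n = h * (‖w‖ / Real.sqrt n) := by ring
      rw [h4]
      have h5 : ‖w‖ / Real.sqrt n ≤ 2 * Real.pi * |w i| := by
        nlinarith [abs_nonneg (w i), h3]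
      exact mul_le_mul_of_nonneg_left h5 hhpos.le
    calc (h * ‖w‖ / Real.sqrt n) ^ k * ‖FourierTransform.fourier (E := EuclideanSpace ℝ (Fin n) → ℂ) φ w‖
        ≤ (h * (2 * Real.pi * |w i|)) ^ k * ‖FourierTransform.fourier (E := EuclideanSpace ℝ (Fin n) → ℂ) φ w‖ :=
          mul_le_mul_of_nonneg_right
            (pow_le_pow_left₀ (by positivity) h2 k) (norm_nonneg _)
      _ = h ^ k * ((2 * Real.pi * |w i|) ^ k * ‖FourierTransform.fourier (E := EuclideanSpace ℝ (Fin n) → ℂ) φ w‖) := by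
          rw [mul_pow]; ring
      _ = h ^ k * ‖FourierTransform.fourier (E := EuclideanSpace ℝ (Fin n) → ℂ) ((pDeriv i)^[k] φ) w‖ := by rw [hFstep i k w]
      _ ≤ h ^ k * (M k * S / h ^ k) :=
          mul_le_mul_of_nonneg_left hF0 (pow_nonneg hhpos.le k)
      _ = M k * S := by field_simp
  have hBinv : ∀ (k : ℕ) (ξ : EuclideanSpace ℝ (Fin n)),
      (τ * ‖ξ‖) ^ k * H ^ k * ‖FourierTransformInv.fourierInv (E := EuclideanSpace ℝ (Fin n) → ℂ) φ ξ‖ ≤ M k * S := by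
    intro k ξ
    have h1 := hB k (-ξ)
    rw [norm_neg] at h1
    rw [Real.fourierInv_eq_fourier_neg]
    refine le_trans ?_ h1
    have h2 : (τ * ‖ξ‖) * H ≤ h * ‖ξ‖ / Real.sqrt n := by
      rw [le_div_iff₀ hsq]
      nlinarith [mul_nonneg (sub_nonneg.2 hh.le) (norm_nonneg ξ)]
    calc (τ * ‖ξ‖) ^ k * H ^ k * ‖FourierTransform.fourier (E := EuclideanSpace ℝ (Fin n) → ℂ) φ (-ξ)‖
        = ((τ * ‖ξ‖) * H) ^ k * ‖FourierTransform.fourier (E := EuclideanSpace ℝ (Fin n) → ℂ) φ (-ξ)‖ := by ring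
      _ ≤ (h * ‖ξ‖ / Real.sqrt n) ^ k * ‖FourierTransform.fourier (E := EuclideanSpace ℝ (Fin n) → ℂ) φ (-ξ)‖ :=
          mul_le_mul_of_nonneg_right
            (pow_le_pow_left₀ (by positivity) h2 k) (norm_nonneg _)
  have hE1 : ∀ (p : ℕ) (ξ : EuclideanSpace ℝ (Fin n)),
      (τ * ‖ξ‖) ^ p * ‖FourierTransformInv.fourierInv (E := EuclideanSpace ℝ (Fin n) → ℂ) φ ξ‖ ≤ c₀ * M p * S := by
    intro p ξ
    have h1 := hBinv p ξ
    have hHp : 1 ≤ H ^ p := one_le_pow₀ hH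
    have hx : 0 ≤ (τ * ‖ξ‖) ^ p * ‖FourierTransformInv.fourierInv (E := EuclideanSpace ℝ (Fin n) → ℂ) φ ξ‖ := by positivity
    calc (τ * ‖ξ‖) ^ p * ‖FourierTransformInv.fourierInv (E := EuclideanSpace ℝ (Fin n) → ℂ) φ ξ‖
        ≤ ((τ * ‖ξ‖) ^ p * ‖FourierTransformInv.fourierInv (E := EuclideanSpace ℝ (Fin n) → ℂ) φ ξ‖) * H ^ p :=
          le_mul_of_one_le_right hx hHp
      _ = (τ * ‖ξ‖) ^ p * H ^ p * ‖FourierTransformInv.fourierInv (E := EuclideanSpace ℝ (Fin n) → ℂ) φ ξ‖ := by ring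
      _ ≤ M p * S := h1
      _ ≤ c₀ * (M p * S) := le_mul_of_one_le_left (mul_nonneg (hMpos p).le hS) hc₀
      _ = c₀ * M p * S := by ring
  have hE2 : ∀ (p : ℕ) (ξ : EuclideanSpace ℝ (Fin n)),
      (τ * ‖ξ‖) ^ (p + (n+1)) * ‖FourierTransformInv.fourierInv (E := EuclideanSpace ℝ (Fin n) → ℂ) φ ξ‖
        ≤ c₀ * M p * M (n+1) * S := by
    intro p ξ
    have h1 := hBinv (p + (n+1)) ξ
    have h2 := hM2 p (n+1)
    have hHk : (0:ℝ) < H ^ (p + (n+1)) := by positivity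
    have h3 : M (p + (n+1)) * S ≤ c₀ * H ^ (p + (n+1)) * M p * M (n+1) * S :=
      mul_le_mul_of_nonneg_right h2 hS
    have h4 : (τ * ‖ξ‖) ^ (p + (n+1)) * H ^ (p + (n+1)) * ‖FourierTransformInv.fourierInv (E := EuclideanSpace ℝ (Fin n) → ℂ) φ ξ‖
        ≤ (c₀ * M p * M (n+1) * S) * H ^ (p + (n+1)) := by
      calc (τ * ‖ξ‖) ^ (p + (n+1)) * H ^ (p + (n+1)) * ‖FourierTransformInv.fourierInv (E := EuclideanSpace ℝ (Fin n) → ℂ) φ ξ‖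
          ≤ M (p + (n+1)) * S := h1
        _ ≤ c₀ * H ^ (p + (n+1)) * M p * M (n+1) * S := h3
        _ = (c₀ * M p * M (n+1) * S) * H ^ (p + (n+1)) := by ring
    have h5 : (τ * ‖ξ‖) ^ (p + (n+1)) * ‖FourierTransformInv.fourierInv (E := EuclideanSpace ℝ (Fin n) → ℂ) φ ξ‖ * H ^ (p + (n+1))
        ≤ (c₀ * M p * M (n+1) * S) * H ^ (p + (n+1)) := by
      calc (τ * ‖ξ‖) ^ (p + (n+1)) * ‖FourierTransformInv.fourierInv (E := EuclideanSpace ℝ (Fin n) → ℂ) φ ξ‖ * H ^ (p + (n+1))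
          = (τ * ‖ξ‖) ^ (p + (n+1)) * H ^ (p + (n+1)) * ‖FourierTransformInv.fourierInv (E := EuclideanSpace ℝ (Fin n) → ℂ) φ ξ‖ := by
            ring
        _ ≤ (c₀ * M p * M (n+1) * S) * H ^ (p + (n+1)) := h4
    exact le_of_mul_le_mul_right h5 hHk
  -- pointwise bound
  have hPoint : ∀ ξ : EuclideanSpace ℝ (Fin n),
      η ξ * ‖FourierTransformInv.fourierInv (E := EuclideanSpace ℝ (Fin n) → ℂ) φ ξ‖ ≤ C * K₁ * S * G ξ := by
    intro ξ
    have hFnn : (0:ℝ) ≤ ‖FourierTransformInv.fourierInv (E := EuclideanSpace ℝ (Fin n) → ℂ) φ ξ‖ := norm_nonneg _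
    have hxnn : (0:ℝ) ≤ τ * ‖ξ‖ := by positivity
    have hKp : ∀ p : ℕ, (1 + τ * ‖ξ‖) ^ (n+1)
        * ((τ * ‖ξ‖) ^ p * ‖FourierTransformInv.fourierInv (E := EuclideanSpace ℝ (Fin n) → ℂ) φ ξ‖) ≤ K₁ * M p * S := by
      intro p
      calc (1 + τ * ‖ξ‖) ^ (n+1) * ((τ * ‖ξ‖) ^ p * ‖FourierTransformInv.fourierInv (E := EuclideanSpace ℝ (Fin n) → ℂ) φ ξ‖)
          ≤ (2 ^ (n+1) * (1 + (τ * ‖ξ‖) ^ (n+1)))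
              * ((τ * ‖ξ‖) ^ p * ‖FourierTransformInv.fourierInv (E := EuclideanSpace ℝ (Fin n) → ℂ) φ ξ‖) :=
            mul_le_mul_of_nonneg_right (one_add_pow_le hxnn (n+1)) (by positivity)
        _ = 2 ^ (n+1) * ((τ * ‖ξ‖) ^ p * ‖FourierTransformInv.fourierInv (E := EuclideanSpace ℝ (Fin n) → ℂ) φ ξ‖)
              + 2 ^ (n+1) * ((τ * ‖ξ‖) ^ (p + (n+1)) * ‖FourierTransformInv.fourierInv (E := EuclideanSpace ℝ (Fin n) → ℂ) φ ξ‖) := by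
            rw [pow_add]; ring
        _ ≤ 2 ^ (n+1) * (c₀ * M p * S) + 2 ^ (n+1) * (c₀ * M p * M (n+1) * S) := by
            have h2n : (0:ℝ) ≤ 2 ^ (n+1) := by positivity
            exact add_le_add (mul_le_mul_of_nonneg_left (hE1 p ξ) h2n)
              (mul_le_mul_of_nonneg_left (hE2 p ξ) h2n)
        _ = K₁ * M p * S := by rw [hK₁def]; ring
    rcases eq_or_lt_of_le hFnn with hF0 | hFpos
    · rw [← hF0, mul_zero]
      have : 0 < G ξ := hGpos ξ
      positivity
    · have hSpos : 0 < S := by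
        have h1 := hE1 0 ξ
        simp only [pow_zero, one_mul, hM0, mul_one] at h1
        refine lt_of_not_ge fun hle => ?_
        have h2 : c₀ * S ≤ 0 := mul_nonpos_of_nonneg_of_nonpos (by linarith) hle
        linarith [lt_of_lt_of_le hFpos h1]
      have hden : (0:ℝ) < (1 + τ * ‖ξ‖) ^ (n+1) * ‖FourierTransformInv.fourierInv (E := EuclideanSpace ℝ (Fin n) → ℂ) φ ξ‖ := by
        have hd1 : (0:ℝ) < 1 + τ * ‖ξ‖ := by positivity
        positivity
      set X : ℝ := K₁ * S / ((1 + τ * ‖ξ‖) ^ (n+1) * ‖FourierTransformInv.fourierInv (E := EuclideanSpace ℝ (Fin n) → ℂ) φ ξ‖) with hX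
      have hXpos : 0 < X := by
        rw [hX]; positivity
      have hX1 : 1 ≤ X := by
        rw [hX, le_div_iff₀ hden]
        have h1 := hKp 0
        simp only [pow_zero, one_mul, hM0, mul_one] at h1
        linarith
      have hA : assocFn M (τ * ‖ξ‖) ≤ Real.log X := by
        refine ciSup_le fun p => ?_
        have ht : 0 ≤ (τ * ‖ξ‖) ^ p / M p :=
          div_nonneg (pow_nonneg hxnn p) (hMpos p).le
        rcases eq_or_lt_of_le ht with ht0 | htpos
        · rw [← ht0, Real.log_zero]
          exact Real.log_nonneg hX1
        · refine Real.log_le_log htpos ?_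
          rw [hX, div_le_div_iff₀ (hMpos p) hden]
          have h1 := hKp p
          nlinarith [h1]
      have h2 : Real.exp (assocFn M (τ * ‖ξ‖)) ≤ X := by
        rw [← Real.exp_log hXpos]
        exact Real.exp_le_exp.2 hA
      have h3 : η ξ ≤ C * X :=
        le_trans (hη ξ) (mul_le_mul_of_nonneg_left h2 hC.le)
      have h4 : η ξ * ‖FourierTransformInv.fourierInv (E := EuclideanSpace ℝ (Fin n) → ℂ) φ ξ‖
          ≤ (C * X) * ‖FourierTransformInv.fourierInv (E := EuclideanSpace ℝ (Fin n) → ℂ) φ ξ‖ :=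
        mul_le_mul_of_nonneg_right h3 hFnn
      refine le_trans h4 (le_of_eq ?_)
      have h5 : X * ‖FourierTransformInv.fourierInv (E := EuclideanSpace ℝ (Fin n) → ℂ) φ ξ‖ = K₁ * S * G ξ := by
        have hDne : ((1 + τ * ‖ξ‖) ^ (n+1) : ℝ) ≠ 0 := by positivity
        rw [hX]
        exact div_mul_cancel_aux _ _ _ hDne (ne_of_gt hFpos)
      calc (C * X) * ‖FourierTransformInv.fourierInv (E := EuclideanSpace ℝ (Fin n) → ℂ) φ ξ‖
          = C * (X * ‖FourierTransformInv.fourierInv (E := EuclideanSpace ℝ (Fin n) → ℂ) φ ξ‖) := by ring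
        _ = C * (K₁ * S * G ξ) := by rw [h5]
        _ = C * K₁ * S * G ξ := by ring
  have hInt : (∫ ξ, η ξ * ‖FourierTransformInv.fourierInv (E := EuclideanSpace ℝ (Fin n) → ℂ) φ ξ‖) ≤ ∫ ξ, C * K₁ * S * G ξ := by
    refine integral_mono_of_nonneg
      (ae_of_all _ fun ξ => mul_nonneg (hηpos ξ).le (norm_nonneg _))
      (hGint.const_mul _) (ae_of_all _ hPoint)
  refine le_trans hInt ?_
  have hIc : (∫ ξ, C * K₁ * S * G ξ) = (C * K₁ * S) * I₀ := by
    rw [hI₀def, ← integral_const_mul]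
  rw [hIc]
  have hcks : (0:ℝ) ≤ C * K₁ * S := by positivity
  nlinarith [hcks, hI₀]
end

section
/- Let E be a TMIB space of ultradistributions of class *−†. For any φ ∈ 𝒮^*_†(ℝⁿ) and f ∈ E_loc, the map ℝⁿ → E, x ↦ f·(T_x φ), is continuous, where T_x φ = φ(·−x). -/
open Filter Topology

/-!
Factor `φ = χ ψ`. Then `T_xφ - T_{x₀}φ = T_xχ (T_xψ - T_{x₀}ψ) + T_{x₀}ψ (T_xχ - T_{x₀}χ)`,
so the module estimate bounds `‖f T_xφ - f T_{x₀}φ‖` by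
`N(T_xψ - T_{x₀}ψ) ‖f T_xχ‖ + N(T_xχ - T_{x₀}χ) ‖f T_{x₀}ψ‖`. Both `N`-factors tend to zero by
continuity of translation, and `‖f T_xχ‖` stays bounded near `x₀`: the translates of `χ` over a
compact neighbourhood form a bounded set, which factors once more as `χ' B₁` with `N` bounded
on `B₁`.
-/

section ModuleEstimate

variable {D E : Type*} [SeminormedAddCommGroup E]

theorem norm_le_of_mem_image_mul (mul : D → D → D) (N : D → ℝ) (Λ : D → E)
    (hmod : ∀ φ ψ, ‖Λ (mul φ ψ)‖ ≤ N ψ * ‖Λ φ‖) {χ : D} {B₁ : Set D} {c : ℝ}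
    (hc : ∀ ψ ∈ B₁, N ψ ≤ c) : ∀ φ ∈ mul χ '' B₁, ‖Λ φ‖ ≤ c * ‖Λ χ‖ := by
  rintro _ ⟨ψ, hψ, rfl⟩
  exact (hmod χ ψ).trans (mul_le_mul_of_nonneg_right (hc ψ hψ) (norm_nonneg _))

theorem exists_norm_le_of_isVonNBounded {𝕜 : Type*} [SeminormedRing 𝕜] [SMul 𝕜 D] [Zero D]
    [TopologicalSpace D] (mul : D → D → D) (N : D → ℝ) (Λ : D → E)
    (hNbdd : ∀ B : Set D, Bornology.IsVonNBounded 𝕜 B → ∃ c : ℝ, ∀ ψ ∈ B, N ψ ≤ c)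
    (hfact : ∀ B : Set D, Bornology.IsVonNBounded 𝕜 B →
      ∃ χ : D, ∃ B₁ : Set D, Bornology.IsVonNBounded 𝕜 B₁ ∧ B = mul χ '' B₁)
    (hmod : ∀ φ ψ, ‖Λ (mul φ ψ)‖ ≤ N ψ * ‖Λ φ‖) {B : Set D} (hB : Bornology.IsVonNBounded 𝕜 B) :
    ∃ C : ℝ, ∀ φ ∈ B, ‖Λ φ‖ ≤ C := by
  obtain ⟨χ, B₁, hB₁, rfl⟩ := hfact B hB
  obtain ⟨c, hc⟩ := hNbdd B₁ hB₁
  exact ⟨c * ‖Λ χ‖, norm_le_of_mem_image_mul mul N Λ hmod hc⟩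

theorem norm_map_mul_sub_map_mul_le {R : Type*} [CommSemiring R] [AddCommGroup D] [Module R D]
    [Module R E] (mul : D →ₗ[R] D →ₗ[R] D) (hcomm : ∀ a b, mul a b = mul b a) (N : D → ℝ)
    (Λ : D →ₗ[R] E) (hmod : ∀ φ ψ, ‖Λ (mul φ ψ)‖ ≤ N ψ * ‖Λ φ‖) (a b a₀ b₀ : D) :
    ‖Λ (mul a b) - Λ (mul a₀ b₀)‖ ≤ N (b - b₀) * ‖Λ a‖ + N (a - a₀) * ‖Λ b₀‖ := by
  have hsplit : mul a b - mul a₀ b₀ = mul a (b - b₀) + mul b₀ (a - a₀) := by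
    rw [map_sub, map_sub, hcomm b₀ a, hcomm b₀ a₀]
    abel
  calc ‖Λ (mul a b) - Λ (mul a₀ b₀)‖
      = ‖Λ (mul a (b - b₀)) + Λ (mul b₀ (a - a₀))‖ := by rw [← map_add, ← hsplit, map_sub]
    _ ≤ _ := (norm_add_le _ _).trans (add_le_add (hmod _ _) (hmod _ _))

end ModuleEstimate

theorem eventually_norm_le_of_isCompact_image {X D E : Type*} [TopologicalSpace X]
    [WeaklyLocallyCompactSpace X] [SeminormedAddCommGroup E] (bdd : Set D → Prop) (T : X → D)
    (hT : ∀ K : Set X, IsCompact K → bdd (T '' K)) (Λ : D → E)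
    (hΛ : ∀ B : Set D, bdd B → ∃ C : ℝ, ∀ φ ∈ B, ‖Λ φ‖ ≤ C) (x₀ : X) :
    ∃ C : ℝ, ∀ᶠ x in 𝓝 x₀, ‖Λ (T x)‖ ≤ C := by
  obtain ⟨K, hK, hKx₀⟩ := exists_compact_mem_nhds x₀
  obtain ⟨C, hC⟩ := hΛ _ (hT K hK)
  exact ⟨C, mem_of_superset hKx₀ fun x hx => hC _ ⟨x, hx, rfl⟩⟩

theorem stmt_9_general (n : ℕ)
    (D : Type*) [AddCommGroup D] [Module ℂ D] [TopologicalSpace D]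
    [ContinuousSMul ℂ D]
    (E : Type*) [NormedAddCommGroup E] [NormedSpace ℂ E]
    (mulD : D →ₗ[ℂ] D →ₗ[ℂ] D)
    (hmulcomm : ∀ a b : D, mulD a b = mulD b a)
    (Ttest : EuclideanSpace ℝ (Fin n) → D →ₗ[ℂ] D)
    (hTmul : ∀ x : EuclideanSpace ℝ (Fin n), ∀ φ ψ : D,
      Ttest x (mulD φ ψ) = mulD (Ttest x φ) (Ttest x ψ))
    (N : D → ℝ)
    (hNbdd : ∀ B : Set D, Bornology.IsVonNBounded ℂ B → ∃ c : ℝ, ∀ ψ ∈ B, N ψ ≤ c)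
    (hNTcont : ∀ ψ : D, ∀ x₀ : EuclideanSpace ℝ (Fin n),
      Tendsto (fun x => N (Ttest x ψ - Ttest x₀ ψ)) (𝓝 x₀) (𝓝 0))
    (hTbdd : ∀ (ψ : D) (K : Set (EuclideanSpace ℝ (Fin n))), IsCompact K →
      Bornology.IsVonNBounded ℂ ((fun x => Ttest x ψ) '' K))
    (hfact : ∀ B : Set D, Bornology.IsVonNBounded ℂ B →
      ∃ χ : D, ∃ B₁ : Set D, Bornology.IsVonNBounded ℂ B₁ ∧
        B = (fun ψ => mulD χ ψ) '' B₁)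
    (Λ : D →ₗ[ℂ] E)
    (hmod : ∀ φ ψ : D, ‖Λ (mulD φ ψ)‖ ≤ N ψ * ‖Λ φ‖)
    (φ : D) :
    Continuous fun x : EuclideanSpace ℝ (Fin n) => Λ (Ttest x φ) := by
  obtain ⟨χ, B₁, -, hφ⟩ := hfact {φ} (Bornology.isVonNBounded_singleton φ)
  obtain ⟨ψ, -, hψ⟩ : φ ∈ (fun ψ => mulD χ ψ) '' B₁ := hφ ▸ rfl
  subst hψ
  have hΛbdd : ∀ B : Set D, Bornology.IsVonNBounded ℂ B → ∃ C : ℝ, ∀ φ ∈ B, ‖Λ φ‖ ≤ C :=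
    fun _ => exists_norm_le_of_isVonNBounded (fun a b => mulD a b) N Λ hNbdd hfact hmod
  rw [continuous_iff_continuousAt]
  intro x₀
  obtain ⟨C, hC⟩ := eventually_norm_le_of_isCompact_image _ (fun x => Ttest x χ) (hTbdd χ) Λ
    hΛbdd x₀
  have hχbdd : IsBoundedUnder (· ≤ ·) (𝓝 x₀) (norm ∘ fun x => ‖Λ (Ttest x χ)‖) :=
    isBoundedUnder_of_eventually_le (hC.mono fun x hx => by rwa [Function.comp_apply, norm_norm])
  have hbound : ∀ x, ‖Λ (Ttest x (mulD χ ψ)) - Λ (Ttest x₀ (mulD χ ψ))‖ ≤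
      N (Ttest x ψ - Ttest x₀ ψ) * ‖Λ (Ttest x χ)‖
        + N (Ttest x χ - Ttest x₀ χ) * ‖Λ (Ttest x₀ ψ)‖ := fun x => by
    rw [hTmul, hTmul]
    exact norm_map_mul_sub_map_mul_le mulD hmulcomm N Λ hmod _ _ _ _
  have hlim := ((hNTcont ψ x₀).zero_mul_isBoundedUnder_le hχbdd).add
    ((hNTcont χ x₀).mul_const ‖Λ (Ttest x₀ ψ)‖)
  rw [zero_mul, add_zero] at hlim
  exact tendsto_iff_norm_sub_tendsto_zero.2
    (squeeze_zero (fun _ => norm_nonneg _) hbound hlim)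

theorem stmt_9 (n : ℕ)
    (D : Type*) [AddCommGroup D] [Module ℂ D] [TopologicalSpace D]
    [IsTopologicalAddGroup D] [ContinuousSMul ℂ D]
    (E : Type*) [NormedAddCommGroup E] [NormedSpace ℂ E] [CompleteSpace E]
    (mulD : D →ₗ[ℂ] D →ₗ[ℂ] D)
    (hmulcomm : ∀ a b : D, mulD a b = mulD b a)
    (hmulassoc : ∀ a b c : D, mulD (mulD a b) c = mulD a (mulD b c))
    (Ttest : EuclideanSpace ℝ (Fin n) → D →ₗ[ℂ] D)
    (hTT : ∀ x y : EuclideanSpace ℝ (Fin n), ∀ φ : D,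
      Ttest x (Ttest y φ) = Ttest (x + y) φ)
    (hTmul : ∀ x : EuclideanSpace ℝ (Fin n), ∀ φ ψ : D,
      Ttest x (mulD φ ψ) = mulD (Ttest x φ) (Ttest x ψ))
    (N : D → ℝ) (hN0 : ∀ φ, 0 ≤ N φ)
    (hNbdd : ∀ B : Set D, Bornology.IsVonNBounded ℂ B → ∃ c : ℝ, ∀ ψ ∈ B, N ψ ≤ c)
    (hNTcont : ∀ ψ : D, ∀ x₀ : EuclideanSpace ℝ (Fin n),
      Tendsto (fun x => N (Ttest x ψ - Ttest x₀ ψ)) (𝓝 x₀) (𝓝 0))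
    (hTbdd : ∀ (ψ : D) (K : Set (EuclideanSpace ℝ (Fin n))), IsCompact K →
      Bornology.IsVonNBounded ℂ ((fun x => Ttest x ψ) '' K))
    (hfact : ∀ B : Set D, Bornology.IsVonNBounded ℂ B →
      ∃ χ : D, ∃ B₁ : Set D, Bornology.IsVonNBounded ℂ B₁ ∧
        B = (fun ψ => mulD χ ψ) '' B₁)
    (Λ : D →ₗ[ℂ] E)
    (hmod : ∀ φ ψ : D, ‖Λ (mulD φ ψ)‖ ≤ N ψ * ‖Λ φ‖)
    (φ : D) :
    Continuous fun x : EuclideanSpace ℝ (Fin n) => Λ (Ttest x φ) :=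
  stmt_9_general n D E mulD hmulcomm Ttest hTmul N hNbdd hNTcont hTbdd hfact Λ hmod φ
end

section
/- Let E be a Banach space of ultradistributions with a continuous multiplication module structure over 𝓕L¹_{ν_E} satisfying ‖g·e‖_E ≤ ‖g‖_{𝓕L¹_{ν_E}}‖e‖_E, let η be a weight of class † with η(x+y) ≤ C₁ η(x) e^{A(τ|y|)}, and let χ, ψ ∈ 𝒮^*_†(ℝⁿ)\{0}. Suppose f ∈ E_loc satisfies ‖f‖_{p,ψ,η} := (∫ ‖f T_yψ‖_E^p η(y)^p dy)^{1/p} < ∞ for some 1 ≤ p < ∞, and the function y ↦ ‖ψ̄ T_yχ‖_{𝓕L¹_{ν_E}} e^{A(τ|y|)} is in L^q (q the Hölder conjugate of p) resp. in L¹. Then, using the reproducing identity ‖ψ‖²_{L²} f T_xχ = ∫_{ℝⁿ} f T_xχ T_yψ T_yψ̄ dy (Bochner integral in E), one obtains ‖f‖_{p,χ,η} ≤ ‖ψ‖_{L²}^{−2} ∫_{ℝⁿ} ‖ψ̄ T_yχ‖_{𝓕L¹_{ν_E}} · C₁ e^{A(τ|y|)} dy · ‖f‖_{p,ψ,η}.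 In particular the norms ‖·‖_{p,χ,η} and ‖·‖_{p,ψ,η} are equivalent, so the amalgam space W(E, L^p_η) does not depend on the choice of nonzero window in 𝒮^*_†(ℝⁿ). -/
/-!
Write `F x = ‖f T_xχ‖ η(x)`, `G y = ‖f T_yψ‖ η(y)` and `g z = ‖ψ̄ T_zχ‖ e^{A(τ|z|)}`.
Since `T_xχ T_yψ T_yψ̄ = T_yψ · T_y(ψ̄ T_{x-y}χ)`, the module estimate, translation invariance
of the multiplier norm and the weight bound `η(x) ≤ C₁ η(y) e^{A(τ|x-y|)}` turn the reproducing
identity into the pointwise convolution bound `‖ψ‖²_{L²} F ≤ C₁ (g ∗ G)`. Young's inequality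
`‖g ∗ G‖_p ≤ ‖g‖₁ ‖G‖_p`, proved for `ℝ≥0∞`-valued functions by Hölder (in the form of Jensen's
inequality for the probability measure `g/‖g‖₁`) and Tonelli, finishes the proof.
-/

open MeasureTheory
open scoped ENNReal

theorem rpow_lintegral_mul_le {α : Type*} [MeasurableSpace α] {μ : Measure α} {p : ℝ}
    (hp : 1 ≤ p) {w f : α → ℝ≥0∞} (hw : AEMeasurable w μ)
    (hf : AEMeasurable (fun a => f a ^ p) μ) :
    (∫⁻ a, w a * f a ∂μ) ^ p ≤ (∫⁻ a, w a ∂μ) ^ (p - 1) * ∫⁻ a, w a * f a ^ p ∂μ := by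
  have hp0 : 0 < p := by linarith
  -- Hölder with exponents `1 - 1/p` and `1/p`, applied to `w` and `w f^p`
  have hq : 0 ≤ 1 - 1 / p := by rw [sub_nonneg, div_le_one hp0]; exact hp
  have hholder := ENNReal.lintegral_mul_norm_pow_le (g := fun a => w a * f a ^ p) hw (hw.mul hf)
    hq (by positivity : 0 ≤ 1 / p) (sub_add_cancel 1 (1 / p))
  have hsplit : ∀ a, w a ^ (1 - 1 / p) * (w a * f a ^ p) ^ (1 / p) = w a * f a := fun a => by
    rw [ENNReal.mul_rpow_of_nonneg _ _ (by positivity), ← ENNReal.rpow_mul,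
      mul_one_div_cancel hp0.ne', ENNReal.rpow_one, ← mul_assoc,
      ← ENNReal.rpow_add_of_nonneg _ _ hq (by positivity), sub_add_cancel, ENNReal.rpow_one]
  simp only [hsplit] at hholder
  calc (∫⁻ a, w a * f a ∂μ) ^ p
      ≤ ((∫⁻ a, w a ∂μ) ^ (1 - 1 / p) * (∫⁻ a, w a * f a ^ p ∂μ) ^ (1 / p)) ^ p :=
        ENNReal.rpow_le_rpow hholder hp0.le
    _ = (∫⁻ a, w a ∂μ) ^ (p - 1) * ∫⁻ a, w a * f a ^ p ∂μ := by
        rw [ENNReal.mul_rpow_of_nonneg _ _ hp0.le, ← ENNReal.rpow_mul, ← ENNReal.rpow_mul,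
          one_div_mul_cancel hp0.ne', ENNReal.rpow_one, sub_mul, one_div_mul_cancel hp0.ne',
          one_mul]

theorem ofReal_integral_le_lintegral_ofReal {α : Type*} [MeasurableSpace α] {μ : Measure α}
    {f : α → ℝ} (hf : ∀ a, 0 ≤ f a) :
    ENNReal.ofReal (∫ a, f a ∂μ) ≤ ∫⁻ a, ENNReal.ofReal (f a) ∂μ := by
  calc ENNReal.ofReal (∫ a, f a ∂μ) ≤ ‖∫ a, f a ∂μ‖ₑ := Real.ofReal_le_enorm _
    _ ≤ ∫⁻ a, ‖f a‖ₑ ∂μ := enorm_integral_le_lintegral_enorm _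
    _ = ∫⁻ a, ENNReal.ofReal (f a) ∂μ := by simp only [Real.enorm_eq_ofReal (hf _)]

theorem ofReal_integral_rpow_rpow_le {α : Type*} [MeasurableSpace α] {μ : Measure α}
    {f : α → ℝ} (hf : ∀ a, 0 ≤ f a) {p : ℝ} (hp : 0 < p) :
    ENNReal.ofReal ((∫ a, f a ^ p ∂μ) ^ (1 / p)) ≤
      (∫⁻ a, ENNReal.ofReal (f a) ^ p ∂μ) ^ (1 / p) := by
  rw [← ENNReal.ofReal_rpow_of_nonneg (integral_nonneg fun a => Real.rpow_nonneg (hf a) p)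
    (by positivity)]
  gcongr
  simpa only [ENNReal.ofReal_rpow_of_nonneg (hf _) hp.le] using
    ofReal_integral_le_lintegral_ofReal fun a => Real.rpow_nonneg (hf a) p

theorem ofReal_integral_rpow_rpow_eq {α : Type*} [MeasurableSpace α] {μ : Measure α}
    {f : α → ℝ} (hf : ∀ a, 0 ≤ f a) {p : ℝ} (hp : 0 < p) (hint : Integrable (fun a => f a ^ p) μ) :
    ENNReal.ofReal ((∫ a, f a ^ p ∂μ) ^ (1 / p)) =
      (∫⁻ a, ENNReal.ofReal (f a) ^ p ∂μ) ^ (1 / p) := by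
  rw [← ENNReal.ofReal_rpow_of_nonneg (integral_nonneg fun a => Real.rpow_nonneg (hf a) p)
    (by positivity), ofReal_integral_eq_lintegral_ofReal hint
      (ae_of_all _ fun a => Real.rpow_nonneg (hf a) p)]
  simp only [ENNReal.ofReal_rpow_of_nonneg (hf _) hp.le]

section Convolution

variable {G : Type*} [MeasurableSpace G] [AddGroup G] [MeasurableAdd₂ G] [MeasurableNeg G]
  {μ : Measure G} [SFinite μ] [μ.IsAddLeftInvariant]

theorem lintegral_lconvolution {f g : G → ℝ≥0∞} (hf : AEMeasurable f μ)
    (hg : AEMeasurable g μ) :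
    ∫⁻ x, (f ⋆ₗ[μ] g) x ∂μ = (∫⁻ x, f x ∂μ) * ∫⁻ x, g x ∂μ := by
  simp only [lconvolution_def]
  rw [lintegral_lintegral_swap (by fun_prop), ← lintegral_mul_const'' _ hf]
  congr 1 with y
  have hg' : AEMeasurable (fun x => g (-y + x)) μ :=
    hg.comp_quasiMeasurePreserving (measurePreserving_add_left μ (-y)).quasiMeasurePreserving
  rw [lintegral_const_mul'' _ hg', lintegral_add_left_eq_self]

theorem lintegral_rpow_lconvolution_le {p : ℝ} (hp : 1 ≤ p) {g f : G → ℝ≥0∞}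
    (hg : AEMeasurable g μ) (hf : AEMeasurable (fun x => f x ^ p) μ) :
    ∫⁻ x, (g ⋆ₗ[μ] f) x ^ p ∂μ ≤ (∫⁻ x, g x ∂μ) ^ p * ∫⁻ x, f x ^ p ∂μ := by
  have hjensen (x : G) :
      (g ⋆ₗ[μ] f) x ^ p ≤ (∫⁻ x, g x ∂μ) ^ (p - 1) * (g ⋆ₗ[μ] (f · ^ p)) x :=
    rpow_lintegral_mul_le hp hg (hf.comp_quasiMeasurePreserving
      ((quasiMeasurePreserving_add_right μ x).comp (quasiMeasurePreserving_neg μ)))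
  calc ∫⁻ x, (g ⋆ₗ[μ] f) x ^ p ∂μ
      ≤ ∫⁻ x, (∫⁻ x, g x ∂μ) ^ (p - 1) * (g ⋆ₗ[μ] (f · ^ p)) x ∂μ := lintegral_mono hjensen
    _ = (∫⁻ x, g x ∂μ) ^ (p - 1) * ((∫⁻ x, g x ∂μ) * ∫⁻ x, f x ^ p ∂μ) := by
        rw [lintegral_const_mul'' _ (by fun_prop), lintegral_lconvolution hg hf]
    _ = (∫⁻ x, g x ∂μ) ^ p * ∫⁻ x, f x ^ p ∂μ := by
        have h := ENNReal.rpow_add_of_nonneg (x := ∫⁻ x, g x ∂μ) (p - 1) 1 (by linarith) zero_le_one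
        rw [sub_add_cancel, ENNReal.rpow_one] at h
        rw [← mul_assoc, ← h]

theorem rpow_lintegral_rpow_lconvolution_le {p : ℝ} (hp : 1 ≤ p) {g f : G → ℝ≥0∞}
    (hg : AEMeasurable g μ) (hf : AEMeasurable (fun x => f x ^ p) μ) :
    (∫⁻ x, (g ⋆ₗ[μ] f) x ^ p ∂μ) ^ (1 / p) ≤ (∫⁻ x, g x ∂μ) * (∫⁻ x, f x ^ p ∂μ) ^ (1 / p) := by
  have hp0 : 0 < p := by linarith
  calc (∫⁻ x, (g ⋆ₗ[μ] f) x ^ p ∂μ) ^ (1 / p)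
      ≤ ((∫⁻ x, g x ∂μ) ^ p * ∫⁻ x, f x ^ p ∂μ) ^ (1 / p) := by
        gcongr; exact lintegral_rpow_lconvolution_le hp hg hf
    _ = (∫⁻ x, g x ∂μ) * (∫⁻ x, f x ^ p ∂μ) ^ (1 / p) := by
        rw [ENNReal.mul_rpow_of_nonneg _ _ (by positivity), ← ENNReal.rpow_mul,
          mul_one_div_cancel hp0.ne', ENNReal.rpow_one]

theorem integral_rpow_rpow_le_of_le_lconvolution {p : ℝ} (hp : 1 ≤ p) {F g f : G → ℝ}
    (hF0 : ∀ x, 0 ≤ F x) (hg0 : ∀ x, 0 ≤ g x)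
    (hf0 : ∀ x, 0 ≤ f x) (hg : Integrable g μ) (hf : Integrable (fun x => f x ^ p) μ)
    (hle : ∀ x, ENNReal.ofReal (F x) ≤
      ((fun x => ENNReal.ofReal (g x)) ⋆ₗ[μ] (fun x => ENNReal.ofReal (f x))) x) :
    (∫ x, F x ^ p ∂μ) ^ (1 / p) ≤ (∫ x, g x ∂μ) * (∫ x, f x ^ p ∂μ) ^ (1 / p) := by
  have hp0 : 0 < p := by linarith
  have hfp : AEMeasurable (fun x => ENNReal.ofReal (f x) ^ p) μ := by
    simpa only [ENNReal.ofReal_rpow_of_nonneg (hf0 _) hp0.le] using hf.aemeasurable.ennreal_ofReal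
  rw [← ENNReal.ofReal_le_ofReal_iff (mul_nonneg (integral_nonneg hg0)
    (Real.rpow_nonneg (integral_nonneg fun x => Real.rpow_nonneg (hf0 x) p) _))]
  calc ENNReal.ofReal ((∫ x, F x ^ p ∂μ) ^ (1 / p))
      ≤ (∫⁻ x, ENNReal.ofReal (F x) ^ p ∂μ) ^ (1 / p) := ofReal_integral_rpow_rpow_le hF0 hp0
    _ ≤ (∫⁻ x, ((fun x => ENNReal.ofReal (g x)) ⋆ₗ[μ] (fun x => ENNReal.ofReal (f x))) x ^ p ∂μ)
          ^ (1 / p) := by gcongr with x; exact hle x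
    _ ≤ (∫⁻ x, ENNReal.ofReal (g x) ∂μ) * (∫⁻ x, ENNReal.ofReal (f x) ^ p ∂μ) ^ (1 / p) :=
        rpow_lintegral_rpow_lconvolution_le hp hg.aemeasurable.ennreal_ofReal hfp
    _ = ENNReal.ofReal ((∫ x, g x ∂μ) * (∫ x, f x ^ p ∂μ) ^ (1 / p)) := by
        rw [← ofReal_integral_eq_lintegral_ofReal hg (ae_of_all _ hg0),
          ← ofReal_integral_rpow_rpow_eq hf0 hp0 hf, ENNReal.ofReal_mul (integral_nonneg hg0)]

end Convolution

theorem norm_mul_translate_le {V D E : Type*} [AddCommGroup V] [Norm E]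
    (mul : D → D → D) (hcomm : ∀ a b, mul a b = mul b a)
    (hassoc : ∀ a b c, mul (mul a b) c = mul a (mul b c))
    (T : V → D → D) (hTT : ∀ x y φ, T x (T y φ) = T (x + y) φ)
    (hTmul : ∀ x φ ψ, T x (mul φ ψ) = mul (T x φ) (T x ψ))
    (N : D → ℝ) (hNT : ∀ x φ, N (T x φ) = N φ)
    (Λ : D → E) (hmod : ∀ φ ρ, ‖Λ (mul φ ρ)‖ ≤ N ρ * ‖Λ φ‖) (χ ψ φ : D) (x y : V) :
    ‖Λ (mul (T x χ) (mul (T y ψ) (T y φ)))‖ ≤ N (mul φ (T (x - y) χ)) * ‖Λ (T y ψ)‖ := by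
  have hregroup : mul (T x χ) (mul (T y ψ) (T y φ)) = mul (T y ψ) (T y (mul φ (T (x - y) χ))) := by
    rw [hTmul, hTT, add_sub_cancel, ← hassoc, hcomm (T x χ), hassoc, hcomm (T x χ)]
  rw [hregroup, ← hNT y]
  exact hmod _ _

theorem ofReal_norm_mul_le_lintegral_of_smul_eq_integral {V E : Type*} [AddCommGroup V] [MeasurableSpace V]
    (μ : Measure V) [NormedAddCommGroup E] [NormedSpace ℝ E]
    {u w : V → E} {v : V → V → E} {c : ℝ} (hc : 0 < c) (hrepro : ∀ x, c • u x = ∫ y, v x y ∂μ)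
    {k : V → ℝ} (hk : ∀ x y, ‖v x y‖ ≤ k (x - y) * ‖w y‖)
    {η ω : V → ℝ} {C : ℝ} (hη0 : ∀ x, 0 ≤ η x) (hη : ∀ x y, η (x + y) ≤ C * η x * ω y) (x : V) :
    ENNReal.ofReal (‖u x‖ * η x) ≤
      ∫⁻ y, ENNReal.ofReal (‖w y‖ * η y) *
        ENNReal.ofReal (c⁻¹ * C * (k (x - y) * ω (x - y))) ∂μ := by
  have hpoint (y : V) :
      ‖v x y‖ * η x ≤ c * (‖w y‖ * η y * (c⁻¹ * C * (k (x - y) * ω (x - y)))) := by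
    have hηx : η x ≤ C * η y * ω (x - y) := by simpa using hη y (x - y)
    calc ‖v x y‖ * η x ≤ k (x - y) * ‖w y‖ * (C * η y * ω (x - y)) :=
          mul_le_mul (hk x y) hηx (hη0 x) ((norm_nonneg _).trans (hk x y))
      _ = c * (‖w y‖ * η y * (c⁻¹ * C * (k (x - y) * ω (x - y)))) := by field_simp
  have hc' : ENNReal.ofReal c ≠ 0 := ENNReal.ofReal_ne_zero_iff.mpr hc
  refine (ENNReal.mul_le_mul_iff_right hc' ENNReal.ofReal_ne_top).mp ?_
  calc ENNReal.ofReal c * ENNReal.ofReal (‖u x‖ * η x)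
      = ‖∫ y, v x y ∂μ‖ₑ * ENNReal.ofReal (η x) := by
        rw [← hrepro, enorm_smul, Real.enorm_eq_ofReal hc.le, ← ofReal_norm,
          ENNReal.ofReal_mul (norm_nonneg _), mul_assoc]
    _ ≤ (∫⁻ y, ‖v x y‖ₑ ∂μ) * ENNReal.ofReal (η x) := by
        gcongr; exact enorm_integral_le_lintegral_enorm _
    _ = ∫⁻ y, ENNReal.ofReal (‖v x y‖ * η x) ∂μ := by
        rw [← lintegral_mul_const' _ _ ENNReal.ofReal_ne_top]
        simp only [ENNReal.ofReal_mul (norm_nonneg _), ofReal_norm]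
    _ ≤ ∫⁻ y, ENNReal.ofReal (c * (‖w y‖ * η y * (c⁻¹ * C * (k (x - y) * ω (x - y))))) ∂μ :=
        lintegral_mono fun y => ENNReal.ofReal_le_ofReal (hpoint y)
    _ = ENNReal.ofReal c * ∫⁻ y, ENNReal.ofReal (‖w y‖ * η y) *
          ENNReal.ofReal (c⁻¹ * C * (k (x - y) * ω (x - y))) ∂μ := by
        rw [← lintegral_const_mul' _ _ ENNReal.ofReal_ne_top]
        simp only [ENNReal.ofReal_mul hc.le,
          ENNReal.ofReal_mul (mul_nonneg (norm_nonneg _) (hη0 _))]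

theorem stmt_10_general (n : ℕ)
    (D : Type*) [AddCommGroup D] [Module ℂ D]
    (E : Type*) [NormedAddCommGroup E] [NormedSpace ℂ E]
    (mulD : D →ₗ[ℂ] D →ₗ[ℂ] D)
    (hmulcomm : ∀ a b : D, mulD a b = mulD b a)
    (hmulassoc : ∀ a b c : D, mulD (mulD a b) c = mulD a (mulD b c))
    (Ttest : EuclideanSpace ℝ (Fin n) → D →ₗ[ℂ] D)
    (hTT : ∀ x y : EuclideanSpace ℝ (Fin n), ∀ φ : D,
      Ttest x (Ttest y φ) = Ttest (x + y) φ)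
    (hTmul : ∀ x : EuclideanSpace ℝ (Fin n), ∀ φ ψ : D,
      Ttest x (mulD φ ψ) = mulD (Ttest x φ) (Ttest x ψ))
    (N : D → ℝ) (hN0 : ∀ φ, 0 ≤ N φ)
    (hNT : ∀ x : EuclideanSpace ℝ (Fin n), ∀ φ : D, N (Ttest x φ) = N φ)
    (η : EuclideanSpace ℝ (Fin n) → ℝ) (hηpos : ∀ x, 0 < η x)
    (A : ℝ → ℝ) (C₁ τ : ℝ) (hC₁ : 0 < C₁)
    (hη : ∀ x y : EuclideanSpace ℝ (Fin n), η (x + y) ≤ C₁ * η x * Real.exp (A (τ * ‖y‖)))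
    (χ ψ ψbar : D)
    (p : ℝ) (hp : 1 ≤ p)
    (Λ : D →ₗ[ℂ] E)
    (hmod : ∀ φ ρ : D, ‖Λ (mulD φ ρ)‖ ≤ N ρ * ‖Λ φ‖)
    (l2 : ℝ) (hl2 : 0 < l2)
    (hrepro : ∀ x : EuclideanSpace ℝ (Fin n),
      l2 ^ 2 • Λ (Ttest x χ) = ∫ y : EuclideanSpace ℝ (Fin n),
        Λ (mulD (Ttest x χ) (mulD (Ttest y ψ) (Ttest y ψbar))))
    -- ‖f‖_{p,ψ,η} < ∞ and the window cross-term is integrable against `e^{A(τ|·|)}`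
    (hfin : Integrable fun y : EuclideanSpace ℝ (Fin n) => (‖Λ (Ttest y ψ)‖ * η y) ^ p)
    (hcross : Integrable fun y : EuclideanSpace ℝ (Fin n) =>
      N (mulD ψbar (Ttest y χ)) * Real.exp (A (τ * ‖y‖))) :
    (∫ x : EuclideanSpace ℝ (Fin n), (‖Λ (Ttest x χ)‖ * η x) ^ p) ^ (1 / p) ≤
      (l2 ^ 2)⁻¹ * C₁ *
        (∫ y : EuclideanSpace ℝ (Fin n),
          N (mulD ψbar (Ttest y χ)) * Real.exp (A (τ * ‖y‖))) *
        (∫ y : EuclideanSpace ℝ (Fin n), (‖Λ (Ttest y ψ)‖ * η y) ^ p) ^ (1 / p) := by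
  have hη0 (x : EuclideanSpace ℝ (Fin n)) : 0 ≤ η x := (hηpos x).le
  have hpoint (x : EuclideanSpace ℝ (Fin n)) : ENNReal.ofReal (‖Λ (Ttest x χ)‖ * η x) ≤
      ((fun z => ENNReal.ofReal
          ((l2 ^ 2)⁻¹ * C₁ * (N (mulD ψbar (Ttest z χ)) * Real.exp (A (τ * ‖z‖))))) ⋆ₗ
        (fun y => ENNReal.ofReal (‖Λ (Ttest y ψ)‖ * η y))) x := by
    rw [lconvolution_comm, lconvolution_def]
    simp only [neg_add_eq_sub]
    exact ofReal_norm_mul_le_lintegral_of_smul_eq_integral volume (pow_pos hl2 2) hrepro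
      (k := fun z => N (mulD ψbar (Ttest z χ))) (w := fun y => Λ (Ttest y ψ))
      (norm_mul_translate_le (mulD · ·) hmulcomm hmulassoc (Ttest · ·) hTT hTmul N hNT Λ hmod
        χ ψ ψbar) hη0 hη x
  have hyoung := integral_rpow_rpow_le_of_le_lconvolution hp
    (fun x => mul_nonneg (norm_nonneg _) (hη0 x))
    (fun z => mul_nonneg (by positivity) (mul_nonneg (hN0 _) (Real.exp_nonneg _)))
    (fun y => mul_nonneg (norm_nonneg _) (hη0 y)) (hcross.const_mul _) hfin hpoint
  rwa [integral_const_mul] at hyoung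

theorem stmt_10 (n : ℕ)
    (D : Type*) [AddCommGroup D] [Module ℂ D]
    (E : Type*) [NormedAddCommGroup E] [NormedSpace ℂ E] [CompleteSpace E]
    (mulD : D →ₗ[ℂ] D →ₗ[ℂ] D)
    (hmulcomm : ∀ a b : D, mulD a b = mulD b a)
    (hmulassoc : ∀ a b c : D, mulD (mulD a b) c = mulD a (mulD b c))
    (Ttest : EuclideanSpace ℝ (Fin n) → D →ₗ[ℂ] D)
    (hTT : ∀ x y : EuclideanSpace ℝ (Fin n), ∀ φ : D,
      Ttest x (Ttest y φ) = Ttest (x + y) φ)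
    (hTmul : ∀ x : EuclideanSpace ℝ (Fin n), ∀ φ ψ : D,
      Ttest x (mulD φ ψ) = mulD (Ttest x φ) (Ttest x ψ))
    (N : D → ℝ) (hN0 : ∀ φ, 0 ≤ N φ)
    (hNT : ∀ x : EuclideanSpace ℝ (Fin n), ∀ φ : D, N (Ttest x φ) = N φ)
    (η : EuclideanSpace ℝ (Fin n) → ℝ) (hηpos : ∀ x, 0 < η x)
    (A : ℝ → ℝ) (C₁ τ : ℝ) (hC₁ : 0 < C₁) (hτ : 0 < τ)
    (hη : ∀ x y : EuclideanSpace ℝ (Fin n), η (x + y) ≤ C₁ * η x * Real.exp (A (τ * ‖y‖)))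
    (χ ψ ψbar : D) (hχ : χ ≠ 0) (hψ : ψ ≠ 0)
    (p : ℝ) (hp : 1 ≤ p)
    (Λ : D →ₗ[ℂ] E)
    (hmod : ∀ φ ρ : D, ‖Λ (mulD φ ρ)‖ ≤ N ρ * ‖Λ φ‖)
    (hFχ : Continuous fun x : EuclideanSpace ℝ (Fin n) => Λ (Ttest x χ))
    (hFψ : Continuous fun y : EuclideanSpace ℝ (Fin n) => Λ (Ttest y ψ))
    (l2 : ℝ) (hl2 : 0 < l2)
    -- Bochner integrability of `y ↦ f T_xχ T_yψ T_yψ̄` and the reproducing identity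
    (hBoch : ∀ x : EuclideanSpace ℝ (Fin n), Integrable fun y : EuclideanSpace ℝ (Fin n) =>
      Λ (mulD (Ttest x χ) (mulD (Ttest y ψ) (Ttest y ψbar))))
    (hrepro : ∀ x : EuclideanSpace ℝ (Fin n),
      l2 ^ 2 • Λ (Ttest x χ) = ∫ y : EuclideanSpace ℝ (Fin n),
        Λ (mulD (Ttest x χ) (mulD (Ttest y ψ) (Ttest y ψbar))))
    -- ‖f‖_{p,ψ,η} < ∞ and the window cross-term is integrable against `e^{A(τ|·|)}`
    (hfin : Integrable fun y : EuclideanSpace ℝ (Fin n) => (‖Λ (Ttest y ψ)‖ * η y) ^ p)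
    (hcross : Integrable fun y : EuclideanSpace ℝ (Fin n) =>
      N (mulD ψbar (Ttest y χ)) * Real.exp (A (τ * ‖y‖))) :
    (∫ x : EuclideanSpace ℝ (Fin n), (‖Λ (Ttest x χ)‖ * η x) ^ p) ^ (1 / p) ≤
      (l2 ^ 2)⁻¹ * C₁ *
        (∫ y : EuclideanSpace ℝ (Fin n),
          N (mulD ψbar (Ttest y χ)) * Real.exp (A (τ * ‖y‖))) *
        (∫ y : EuclideanSpace ℝ (Fin n), (‖Λ (Ttest y ψ)‖ * η y) ^ p) ^ (1 / p) :=
  stmt_10_general n D E mulD hmulcomm hmulassoc Ttest hTT hTmul N hN0 hNT η hηpos A C₁ τ hC₁ hη χ ψ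
    ψbar p hp Λ hmod l2 hl2 hrepro hfin hcross
end

section
/- Let {r_p}_{p∈ℤ₊} be a non-decreasing sequence of positive reals tending to +∞. Then there exists a non-decreasing sequence {s_p}_{p∈ℤ₊} of positive reals tending to +∞ with s_p ≤ r_p for all p and the submultiplicativity-type property Π_{j=1}^{m+k} s_j ≤ 2^{m+k} (Π_{j=1}^m s_j)(Π_{j=1}^k s_j) for all m, k ∈ ℤ₊. Consequently, if {A_p} satisfies (M.2) with constants c₀, H, then the modified sequence A_p Π_{j=1}^p s_j satisfies (M.2) with constants c₀ and 2H. -/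
/-!
Take `s p = (p + 1) t p`, where `t p = min_{q ≤ p} r q / (q + 1)` is the running minimum.
Then `s ≤ r`, and `s` is non-decreasing because `r` is. Since `t` is antitone,
`∏_{j < m+k} t j ≤ (∏_{j < m} t j) (∏_{j < k} t j)`, and multiplying by
`(m + k)! ≤ 2^(m+k) m! k!` gives the product inequality for `s`. If `s` stayed bounded,
`r` would eventually exceed its bound, the minimum defining `t` would stop decreasing, and
`s` would grow linearly. (M.2) is stable under termwise products of nonnegative sequences.
-/

open Finset Filter
open scoped Nat

theorem Nat.factorial_add_le (m k : ℕ) : (m + k)! ≤ 2 ^ (m + k) * m ! * k ! := by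
  rw [← Nat.add_choose_mul_factorial_mul_factorial m k, mul_assoc, mul_assoc]
  exact Nat.mul_le_mul_right _ (Nat.choose_le_two_pow _ _)

section Products

variable {R : Type*} [CommSemiring R]

theorem prod_range_succ_mul_eq_factorial_mul (t : ℕ → R) (n : ℕ) :
    ∏ j ∈ range n, ((j + 1 : R) * t j) = n ! * ∏ j ∈ range n, t j := by
  rw [prod_mul_distrib, ← prod_range_add_one_eq_factorial]
  push_cast
  rfl

variable [PartialOrder R] [IsOrderedRing R]

theorem prod_range_add_le_of_antitone {t : ℕ → R} (ht : Antitone t) (h0 : ∀ p, 0 ≤ t p)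
    (m k : ℕ) : ∏ j ∈ range (m + k), t j ≤ (∏ j ∈ range m, t j) * ∏ j ∈ range k, t j := by
  rw [prod_range_add]
  gcongr with i
  · exact prod_nonneg fun j _ => h0 j
  · exact fun _ _ => h0 _
  · exact ht (Nat.le_add_left i m)

theorem prod_range_succ_mul_add_le_two_pow_mul {t : ℕ → R} (ht : Antitone t)
    (h0 : ∀ p, 0 ≤ t p) (m k : ℕ) :
    ∏ j ∈ range (m + k), ((j + 1 : R) * t j) ≤
      2 ^ (m + k) * (∏ j ∈ range m, ((j + 1 : R) * t j)) *
        ∏ j ∈ range k, ((j + 1 : R) * t j) := by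
  simp only [prod_range_succ_mul_eq_factorial_mul]
  have hfact : ((m + k)! : R) ≤ 2 ^ (m + k) * m ! * k ! := by
    simpa using Nat.mono_cast (α := R) (Nat.factorial_add_le m k)
  calc ((m + k)! : R) * ∏ j ∈ range (m + k), t j
      ≤ (2 ^ (m + k) * m ! * k !) * ((∏ j ∈ range m, t j) * ∏ j ∈ range k, t j) :=
        mul_le_mul hfact (prod_range_add_le_of_antitone ht h0 m k)
          (prod_nonneg fun j _ => h0 j) ((Nat.cast_nonneg _).trans hfact)
    _ = _ := by ring

def SatisfiesM2 (A : ℕ → R) (c₀ H : R) : Prop :=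
  ∀ p q, A (p + q) ≤ c₀ * H ^ (p + q) * A p * A q

theorem SatisfiesM2.mul {A B : ℕ → R} {c₀ c₁ H L : R} (hA : SatisfiesM2 A c₀ H)
    (hB : SatisfiesM2 B c₁ L) (hA0 : ∀ p, 0 ≤ A p) (hB0 : ∀ p, 0 ≤ B p) :
    SatisfiesM2 (fun p => A p * B p) (c₀ * c₁) (H * L) := fun p q =>
  calc A (p + q) * B (p + q)
      ≤ (c₀ * H ^ (p + q) * A p * A q) * (c₁ * L ^ (p + q) * B p * B q) :=
        mul_le_mul (hA p q) (hB p q) (hB0 _) ((hA0 _).trans (hA p q))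
    _ = _ := by ring

end Products

noncomputable def minRatio (r : ℕ → ℝ) : ℕ → ℝ
  | 0 => r 0
  | p + 1 => min (minRatio r p) (r (p + 1) / (p + 2))

noncomputable def subordinate (r : ℕ → ℝ) (p : ℕ) : ℝ := (p + 1) * minRatio r p

section Subordinate

variable {r : ℕ → ℝ}

theorem minRatio_succ (r : ℕ → ℝ) (p : ℕ) :
    minRatio r (p + 1) = min (minRatio r p) (r (p + 1) / (p + 2)) := rfl

theorem minRatio_antitone (r : ℕ → ℝ) : Antitone (minRatio r) :=
  antitone_nat_of_succ_le fun _ => min_le_left _ _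

theorem minRatio_pos (hr : ∀ p, 0 < r p) (p : ℕ) : 0 < minRatio r p := by
  induction p with
  | zero => exact hr 0
  | succ p ih => exact lt_min ih (by have := hr (p + 1); positivity)

theorem minRatio_le_div (r : ℕ → ℝ) (p : ℕ) : minRatio r p ≤ r p / (p + 1) := by
  cases p with
  | zero => simp [minRatio]
  | succ p =>
    rw [minRatio_succ]
    push_cast
    exact (min_le_right _ _).trans_eq (by ring_nf)

theorem subordinate_le (r : ℕ → ℝ) (p : ℕ) : subordinate r p ≤ r p := by
  rw [subordinate, ← le_div_iff₀' (by positivity)]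
  exact minRatio_le_div r p

theorem subordinate_pos (hr : ∀ p, 0 < r p) (p : ℕ) : 0 < subordinate r p := by
  have := minRatio_pos hr p
  unfold subordinate
  positivity

theorem subordinate_succ (r : ℕ → ℝ) (p : ℕ) :
    subordinate r (p + 1) = min ((p + 2) * minRatio r p) (r (p + 1)) := by
  rw [subordinate, minRatio_succ, mul_min_of_nonneg _ _ (by positivity)]
  push_cast
  rw [add_assoc, one_add_one_eq_two, mul_div_cancel₀ _ (by positivity)]

theorem subordinate_monotone (hr : ∀ p, 0 < r p) (hmono : Monotone r) :
    Monotone (subordinate r) := by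
  refine monotone_nat_of_le_succ fun p => ?_
  rw [subordinate_succ]
  refine le_min ?_ ((subordinate_le r p).trans (hmono p.le_succ))
  have := minRatio_pos hr p
  unfold subordinate
  gcongr
  linarith

theorem subordinate_tendsto_atTop (hr : ∀ p, 0 < r p) (hmono : Monotone r)
    (htop : Tendsto r atTop atTop) : Tendsto (subordinate r) atTop atTop := by
  refine tendsto_atTop_atTop_of_monotone (subordinate_monotone hr hmono) fun B => ?_
  by_contra! hB
  obtain ⟨N, hN⟩ := tendsto_atTop_atTop.mp htop B
  -- Once `r` exceeds the bound `B` of `subordinate r`, the minimum defining `minRatio r` stalls.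
  have hconst : ∀ p ≥ N, minRatio r p = minRatio r N := by
    refine Nat.le_induction rfl fun p hp ih => ?_
    have hlt : minRatio r (p + 1) < r (p + 1) / (p + 2) := by
      rw [lt_div_iff₀ (by positivity)]
      have := hB (p + 1)
      have := hN (p + 1) (by omega)
      rw [subordinate] at *
      push_cast at *
      linarith
    rw [minRatio_succ, min_lt_iff, lt_self_iff_false, or_false] at hlt
    rw [minRatio_succ, min_eq_left hlt.le, ih]
  have hlin : Tendsto (fun p : ℕ => ((p : ℝ) + 1) * minRatio r N) atTop atTop :=
    (tendsto_atTop_add_const_right _ 1 tendsto_natCast_atTop_atTop).atTop_mul_const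
      (minRatio_pos hr N)
  have hsub : Tendsto (subordinate r) atTop atTop :=
    hlin.congr' <| eventually_atTop.mpr ⟨N, fun p hp => by rw [subordinate, hconst p hp]⟩
  obtain ⟨p, hp⟩ := (hsub.eventually_ge_atTop B).exists
  exact (hB p).not_ge hp

theorem satisfiesM2_prod_range_subordinate (hr : ∀ p, 0 < r p) :
    SatisfiesM2 (fun n => ∏ j ∈ range n, subordinate r j) 1 2 := fun m k => by
  simpa only [one_mul, subordinate] using
    prod_range_succ_mul_add_le_two_pow_mul (minRatio_antitone r)
      (fun p => (minRatio_pos hr p).le) m k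

end Subordinate

/-- Every non-decreasing positive sequence `r` tending to `+∞` admits a
subordinate non-decreasing positive sequence `s ≤ r` tending to `+∞` with
`∏_{j=1}^{m+k} s_j ≤ 2^{m+k} (∏_{j=1}^m s_j)(∏_{j=1}^k s_j)`; consequently, if `{A_p}`
satisfies `(M.2)` with constants `c₀, H`, then `A_p ∏_{j=1}^p s_j` satisfies `(M.2)` with
constants `c₀` and `2H`.  (Here `s j` denotes the `(j+1)`-st term `s_{j+1}`, so that
`∏_{j=1}^m s_j` is `∏ j ∈ Finset.range m, s j`.) -/
theorem stmt_16 (r : ℕ → ℝ) (hrpos : ∀ p, 0 < r p) (hrmono : Monotone r)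
    (hrtop : Filter.Tendsto r Filter.atTop Filter.atTop) :
    ∃ s : ℕ → ℝ, (∀ p, 0 < s p) ∧ Monotone s ∧
      Filter.Tendsto s Filter.atTop Filter.atTop ∧ (∀ p, s p ≤ r p) ∧
      (∀ m k : ℕ, (∏ j ∈ Finset.range (m + k), s j) ≤
        2 ^ (m + k) * (∏ j ∈ Finset.range m, s j) * (∏ j ∈ Finset.range k, s j)) ∧
      (∀ (A : ℕ → ℝ) (c₀ H : ℝ), 1 ≤ c₀ → 1 ≤ H → (∀ p, 0 < A p) →
        (∀ p q : ℕ, A (p + q) ≤ c₀ * H ^ (p + q) * A p * A q) →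
        (∀ p q : ℕ, A (p + q) * ∏ j ∈ Finset.range (p + q), s j ≤
          c₀ * (2 * H) ^ (p + q) * (A p * ∏ j ∈ Finset.range p, s j) *
            (A q * ∏ j ∈ Finset.range q, s j))) := by
  have hprod := satisfiesM2_prod_range_subordinate hrpos
  refine ⟨subordinate r, subordinate_pos hrpos, subordinate_monotone hrpos hrmono,
    subordinate_tendsto_atTop hrpos hrmono hrtop, subordinate_le r,
    fun m k => by simpa only [one_mul] using hprod m k, ?_⟩
  intro A c₀ H _ _ hA hM2 p q
  have hAs : SatisfiesM2 (fun n => A n * ∏ j ∈ range n, subordinate r j) (c₀ * 1) (H * 2) :=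
    SatisfiesM2.mul hM2 hprod (fun n => (hA n).le)
      (fun n => prod_nonneg fun j _ => (subordinate_pos hrpos j).le)
  simpa only [mul_one, mul_comm H] using hAs p q
end
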